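/- arXiv:2010.13274 — 8 statements merged into one kernel-verified Lean document; each statement's English description precedes it below -/
import Mathlib

section
/- Let n > 3. The group presented by generators r_2, r_3, …, r_n subject to the relators (R1)–(R6) is isomorphic to the symmetric group of degree n (the group of permutations of a set with n elements). -/
/-- Generator indices `r_2, …, r_n` for the prefix-reversal presentation of `S_n`. -/
def GenA (n : ℕ) : Type := {k : ℕ // 2 ≤ k ∧ k ≤ n}

/-- The generator `r_k` as an element of the free group (equal to `1` out of range;
all occurrences in the relators below are in range). -/
def rA (n : ℕ) (k : ℕ) : FreeGroup (GenA n) :=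
  if h : 2 ≤ k ∧ k ≤ n then FreeGroup.of ⟨k, h⟩ else 1

/-- The relators (R1)–(R6). -/
def relsA (n : ℕ) : Set (FreeGroup (GenA n)) :=
  {w | (∃ k, 2 ≤ k ∧ k ≤ n ∧ w = (rA n k) ^ 2) ∨
       (w = (rA n 2 * rA n 3) ^ 3) ∨
       (∃ k, 4 ≤ k ∧ k ≤ n ∧ w = (rA n 2 * rA n k) ^ 4) ∨
       (∃ l k, 4 ≤ l ∧ l ≤ n ∧ 3 ≤ k ∧ k ≤ l - 1 ∧
         w = rA n l * rA n (l - k + 2) * rA n 2 * rA n (l - k + 2) *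
             rA n l * rA n k * rA n 2 * rA n k) ∨
       (∃ k, 3 ≤ k ∧ k ≤ n - 1 ∧
         w = rA n k * rA n (k - 1) * rA n (k + 1) * rA n 2 *
             rA n (k + 1) * rA n k * rA n (k + 1)) ∨
       (∃ k, 3 ≤ k ∧ k ≤ n - 1 ∧
         w = (rA n k * rA n (k - 1)) ^ 2 * rA n (k + 1) * rA n 3 *
             rA n (k + 1) * rA n (k - 1) * rA n (k + 1))}


/-!
The elements `t_k = r_k r_2 r_k` (`2 ≤ k ≤ n`) satisfy the Coxeter relations of type `A_{n-1}`
(in `S_n` they are the adjacent transpositions `(k-2 k-1)`): by (R4), `r_l` conjugates `t_j`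
to `t_{l-j+2}`, which moves every braid or commutation relation to one involving `t_2`, and
those follow from (R2) and (R3). By (R5), `r_{k+1} = r_k r_{k-1} t_{k+1} r_k`, so the `t_k`
generate. A group generated by `s_0, …, s_{N-1}` satisfying the type `A` relations has at most
`(N+1)!` elements, because the products `s_a s_{a+1} ⋯ s_{N-1}` (`a ≤ N`) represent all left
cosets of the subgroup generated by `s_0, …, s_{N-2}`. So the presented group has at most `n!`
elements, and it maps onto `S_n` by sending `r_k` to the reversal of the first `k` letters.
-/

open Subgroup Nat Equiv
open scoped Pointwise

section InvolutionRelations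

variable {G : Type*} [Group G] {a b : G}

theorem mul_pow_eq_one_comm {m : ℕ} (h : (a * b) ^ m = 1) : (b * a) ^ m = 1 := by
  simpa [h] using (mul_pow_mul a b m).symm

theorem commute_of_mul_pow_two_eq_one (ha : a * a = 1) (hb : b * b = 1) (h : (a * b) ^ 2 = 1) :
    Commute a b := by
  rw [pow_two] at h
  have h' := eq_inv_of_mul_eq_one_left h
  rwa [mul_inv_rev, inv_eq_of_mul_eq_one_right ha, inv_eq_of_mul_eq_one_right hb] at h'

theorem braid_of_mul_pow_three_eq_one (ha : a * a = 1) (hb : b * b = 1) (h : (a * b) ^ 3 = 1) :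
    a * b * a = b * a * b := by
  have h' : a * b * a * (b * a * b) = 1 := by
    rw [← h]; simp only [pow_succ, pow_zero, one_mul, mul_assoc]
  rwa [mul_eq_one_iff_eq_inv, mul_inv_rev, mul_inv_rev, inv_eq_of_mul_eq_one_right ha,
    inv_eq_of_mul_eq_one_right hb, ← mul_assoc] at h'

end InvolutionRelations

section TypeA

variable {K : Type*} [Group K] {s : ℕ → K} {N : ℕ}

structure TypeARelations (s : ℕ → K) (N : ℕ) : Prop where
  mul_self : ∀ i < N, s i * s i = 1
  braid : ∀ i, i + 1 < N → s i * s (i + 1) * s i = s (i + 1) * s i * s (i + 1)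
  commute : ∀ i j, i + 2 ≤ j → j < N → Commute (s i) (s j)

theorem TypeARelations.mono {M : ℕ} (hs : TypeARelations s N) (h : M ≤ N) :
    TypeARelations s M :=
  ⟨fun i _ => hs.mul_self i (by omega), fun i _ => hs.braid i (by omega),
    fun i j hij _ => hs.commute i j hij (by omega)⟩

def ascProd (s : ℕ → K) (a m : ℕ) : K := ((List.range' a m).map s).prod

theorem ascProd_zero (s : ℕ → K) (a : ℕ) : ascProd s a 0 = 1 := rfl

theorem ascProd_succ (s : ℕ → K) (a m : ℕ) :
    ascProd s a (m + 1) = s a * ascProd s (a + 1) m := by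
  simp [ascProd, List.range'_succ]

theorem ascProd_add (s : ℕ → K) (a m m' : ℕ) :
    ascProd s a (m + m') = ascProd s a m * ascProd s (a + m) m' := by
  rw [ascProd, ← List.range'_append_1, List.map_append, List.prod_append]; rfl

theorem Commute.ascProd_right {x : K} {a m : ℕ}
    (h : ∀ j, a ≤ j → j < a + m → Commute x (s j)) : Commute x (ascProd s a m) :=
  Commute.list_prod_right _ _ (by simp only [List.mem_map, List.mem_range']; grind)

theorem TypeARelations.mul_ascProd (hs : TypeARelations s N) {a m j : ℕ} (haj : a ≤ j)
    (hj : j + 1 < a + m) (hN : a + m ≤ N) :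
    s (j + 1) * ascProd s a m = ascProd s a m * s j := by
  obtain ⟨e, rfl⟩ : ∃ e, m = (j - a) + 2 + e := ⟨m - (j - a) - 2, by omega⟩
  have hsplit : ascProd s a (j - a + 2 + e) =
      ascProd s a (j - a) * (s j * s (j + 1)) * ascProd s (j + 2) e := by
    rw [ascProd_add, ascProd_add, ascProd_succ, ascProd_succ, ascProd_zero,
      show a + (j - a) = j by omega, show a + (j - a + 2) = j + 2 by omega, mul_one]
  have hleft : Commute (s (j + 1)) (ascProd s a (j - a)) :=
    Commute.ascProd_right fun i _ _ => (hs.commute i (j + 1) (by omega) (by omega)).symm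
  have hright : Commute (s j) (ascProd s (j + 2) e) :=
    Commute.ascProd_right fun i _ _ => hs.commute j i (by omega) (by omega)
  rw [hsplit]
  calc s (j + 1) * (ascProd s a (j - a) * (s j * s (j + 1)) * ascProd s (j + 2) e)
      = ascProd s a (j - a) * (s (j + 1) * s j * s (j + 1)) * ascProd s (j + 2) e := by
        rw [← mul_assoc, ← mul_assoc, hleft.eq]; group
    _ = ascProd s a (j - a) * (s j * s (j + 1)) * (s j * ascProd s (j + 2) e) := by
        rw [← hs.braid j (by omega)]; group
    _ = _ := by rw [hright.eq]; group

def ascProdCosets (s : ℕ → K) (N : ℕ) : Set K :=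
  ⋃ a : Fin (N + 2), ascProd s a (N + 1 - a) • (closure (s '' Set.Iio N) : Set K)

theorem TypeARelations.exists_mul_ascProd (hs : TypeARelations s (N + 1)) {i a : ℕ} (hi : i ≤ N)
    (ha : a ≤ N + 1) :
    ∃ a' ≤ N + 1, ∃ c ∈ closure (s '' Set.Iio N),
      s i * ascProd s a (N + 1 - a) = ascProd s a' (N + 1 - a') * c := by
  have hmem : ∀ j < N, s j ∈ closure (s '' Set.Iio N) := fun j hj =>
    subset_closure ⟨j, hj, rfl⟩
  rcases lt_trichotomy (i + 1) a with hlt | rfl | hgt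
  · refine ⟨a, ha, s i, hmem i (by omega), ?_⟩
    exact (Commute.ascProd_right fun j _ _ => hs.commute i j (by omega) (by omega)).eq
  · refine ⟨i, by omega, 1, one_mem _, ?_⟩
    rw [mul_one, show N + 1 - i = N + 1 - (i + 1) + 1 by omega, ascProd_succ]
  rcases eq_or_lt_of_le (show a ≤ i by omega) with rfl | hlt
  · refine ⟨a + 1, by omega, 1, one_mem _, ?_⟩
    rw [mul_one, show N + 1 - a = N + 1 - (a + 1) + 1 by omega, ascProd_succ, ← mul_assoc,
      hs.mul_self a (by omega), one_mul]
  · obtain ⟨j, rfl⟩ : ∃ j, i = j + 1 := ⟨i - 1, by omega⟩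
    exact ⟨a, ha, s j, hmem j (by omega), hs.mul_ascProd (by omega) (by omega) (by omega)⟩

theorem TypeARelations.mul_mem_ascProdCosets (hs : TypeARelations s (N + 1)) {i : ℕ}
    (hi : i ≤ N) {y : K} (hy : y ∈ ascProdCosets s N) : s i * y ∈ ascProdCosets s N := by
  simp only [ascProdCosets, Set.mem_iUnion, Set.mem_smul_set, smul_eq_mul, SetLike.mem_coe]
    at hy ⊢
  obtain ⟨a, h, hh, rfl⟩ := hy
  obtain ⟨a', ha', c, hc, he⟩ := hs.exists_mul_ascProd hi (show (a : ℕ) ≤ N + 1 by omega)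
  exact ⟨⟨a', by omega⟩, c * h, mul_mem hc hh, by rw [← mul_assoc (s i), he, mul_assoc]⟩

theorem TypeARelations.closure_subset_ascProdCosets (hs : TypeARelations s (N + 1)) :
    (closure (s '' Set.Iio (N + 1)) : Set K) ⊆ ascProdCosets s N := by
  intro x hx
  induction hx using closure_induction_left with
  | one =>
    simp only [ascProdCosets, Set.mem_iUnion, Set.mem_smul_set, smul_eq_mul, SetLike.mem_coe]
    exact ⟨Fin.last _, 1, one_mem _, by simp [ascProd_zero]⟩
  | mul_left x hx y _ ih =>
    obtain ⟨i, hi, rfl⟩ := hx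
    exact hs.mul_mem_ascProdCosets (by simpa using hi) ih
  | inv_mul_cancel x hx y _ ih =>
    obtain ⟨i, hi, rfl⟩ := hx
    rw [inv_eq_of_mul_eq_one_right (hs.mul_self i hi)]
    exact hs.mul_mem_ascProdCosets (by simpa using hi) ih

theorem encard_ascProdCosets_le (s : ℕ → K) (N : ℕ) :
    (ascProdCosets s N).encard ≤ (N + 2) * (closure (s '' Set.Iio N) : Set K).encard :=
  (Set.encard_iUnion_le_of_fintype _).trans (by simp)

theorem TypeARelations.encard_closure_le (hs : TypeARelations s N) :
    (closure (s '' Set.Iio N) : Set K).encard ≤ (N + 1)! := by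
  induction N with
  | zero => simp
  | succ N ih =>
    calc (closure (s '' Set.Iio (N + 1)) : Set K).encard
        ≤ (N + 2) * (closure (s '' Set.Iio N) : Set K).encard :=
          (Set.encard_le_encard hs.closure_subset_ascProdCosets).trans
            (encard_ascProdCosets_le s N)
      _ ≤ (N + 2) * (N + 1)! := by gcongr; exact ih (hs.mono (by omega))
      _ = (N + 1 + 1)! := by push_cast [Nat.factorial_succ]; ring

end TypeA

namespace PrefixReversal

variable {n : ℕ}

abbrev Pres (n : ℕ) := PresentedGroup (relsA n)

def r (n k : ℕ) : Pres n := PresentedGroup.mk _ (rA n k)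

def t (n k : ℕ) : Pres n := r n k * r n 2 * r n k

theorem r_mul_self {k : ℕ} (h2 : 2 ≤ k) (hk : k ≤ n) : r n k * r n k = 1 := by
  have h : _ ∈ relsA n := Or.inl ⟨k, h2, hk, rfl⟩
  simpa [r, pow_two] using PresentedGroup.one_of_mem h

theorem relator_two : (r n 2 * r n 3) ^ 3 = 1 := by
  have h : _ ∈ relsA n := Or.inr (Or.inl rfl)
  simpa [r] using PresentedGroup.one_of_mem h

theorem relator_three {k : ℕ} (h4 : 4 ≤ k) (hk : k ≤ n) : (r n 2 * r n k) ^ 4 = 1 := by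
  have h : _ ∈ relsA n := Or.inr (Or.inr (Or.inl ⟨k, h4, hk, rfl⟩))
  simpa [r] using PresentedGroup.one_of_mem h

theorem relator_four {l k : ℕ} (hl : 4 ≤ l) (hln : l ≤ n) (hk : 3 ≤ k) (hkl : k ≤ l - 1) :
    r n l * r n (l - k + 2) * r n 2 * r n (l - k + 2) * r n l * r n k * r n 2 * r n k = 1 := by
  have h : _ ∈ relsA n := Or.inr (Or.inr (Or.inr (Or.inl ⟨l, k, hl, hln, hk, hkl, rfl⟩)))
  simpa [r] using PresentedGroup.one_of_mem h

theorem relator_five {k : ℕ} (hk : 3 ≤ k) (hkn : k ≤ n - 1) :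
    r n k * r n (k - 1) * r n (k + 1) * r n 2 * r n (k + 1) * r n k * r n (k + 1) = 1 := by
  have h : _ ∈ relsA n := Or.inr (Or.inr (Or.inr (Or.inr (Or.inl ⟨k, hk, hkn, rfl⟩))))
  simpa [r] using PresentedGroup.one_of_mem h

theorem r_inv {k : ℕ} (h2 : 2 ≤ k) (hk : k ≤ n) : (r n k)⁻¹ = r n k :=
  inv_eq_of_mul_eq_one_right (r_mul_self h2 hk)

theorem r_mul_r_mul {k : ℕ} (h2 : 2 ≤ k) (hk : k ≤ n) (x : Pres n) :
    r n k * (r n k * x) = x := by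
  rw [← mul_assoc, r_mul_self h2 hk, one_mul]

theorem t_two (hn : 2 ≤ n) : t n 2 = r n 2 := by
  rw [t, r_mul_self le_rfl hn, one_mul]

theorem t_mul_self {k : ℕ} (h2 : 2 ≤ k) (hk : k ≤ n) : t n k * t n k = 1 := by
  simp only [t, mul_assoc, r_mul_r_mul h2 hk, r_mul_r_mul le_rfl (h2.trans hk)]
  exact r_mul_self h2 hk

theorem r_mul_t_mul_r {j l : ℕ} (hj : 2 ≤ j) (hjl : j ≤ l) (hl : l ≤ n) :
    r n l * t n j * r n l = t n (l - j + 2) := by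
  rcases eq_or_lt_of_le hj with rfl | hj3
  · rw [t_two (by omega), Nat.sub_add_cancel hjl]; rfl
  rcases eq_or_lt_of_le hjl with rfl | hjl
  · simp only [t, Nat.sub_self, zero_add, mul_assoc, r_mul_r_mul hj hl, r_mul_self hj hl,
      mul_one]
    rw [← mul_assoc, r_mul_self le_rfl (by omega), one_mul]
  · have h := relator_four (n := n) (l := l) (k := l - j + 2) (by omega) hl (by omega) (by omega)
    rw [show l - (l - j + 2) + 2 = j by omega] at h
    rw [← inv_eq_of_mul_eq_one_right (t_mul_self (k := l - j + 2) (by omega) (by omega))]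
    exact eq_inv_of_mul_eq_one_left (by simpa only [t, mul_assoc] using h)

theorem t_mul_t_eq_conj {j k : ℕ} (hj : 2 ≤ j) (hjk : j ≤ k) (hk : k ≤ n) :
    t n j * t n k = r n k * (t n (k - j + 2) * t n 2) * r n k := by
  calc t n j * t n k = (r n k * t n (k - j + 2) * r n k) * (r n k * t n 2 * r n k) := by
        rw [r_mul_t_mul_r (by omega) (by omega) hk, r_mul_t_mul_r le_rfl (by omega) hk,
          show k - (k - j + 2) + 2 = j by omega, show k - 2 + 2 = k by omega]
    _ = r n k * (t n (k - j + 2) * t n 2) * r n k := by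
        simp only [mul_assoc, r_mul_r_mul (by omega) hk]

theorem t_mul_t_pow_eq_one {j k m : ℕ} (hj : 2 ≤ j) (hjk : j ≤ k) (hk : k ≤ n)
    (h : (t n 2 * t n (k - j + 2)) ^ m = 1) : (t n j * t n k) ^ m = 1 := by
  rw [t_mul_t_eq_conj hj hjk hk]
  nth_rw 2 [← r_inv (by omega) hk]
  rw [conj_pow, mul_pow_eq_one_comm h, mul_one, mul_inv_cancel]

theorem t_two_mul_t_three_pow_three (hn : 3 ≤ n) : (t n 2 * t n 3) ^ 3 = 1 := by
  have h : t n 2 * t n 3 = (r n 2 * r n 3) ^ 2 := by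
    rw [t_two (by omega), t, pow_two]; simp only [mul_assoc]
  rw [h, ← pow_mul, mul_comm, pow_mul, relator_two, one_pow]

theorem t_two_mul_t_pow_two {k : ℕ} (h4 : 4 ≤ k) (hk : k ≤ n) : (t n 2 * t n k) ^ 2 = 1 := by
  have h : t n 2 * t n k = (r n 2 * r n k) ^ 2 := by
    rw [t_two (by omega), t, pow_two]; simp only [mul_assoc]
  rw [h, ← pow_mul, relator_three h4 hk]

theorem typeARelations_t (hn : 3 ≤ n) : TypeARelations (fun i => t n (i + 2)) (n - 1) where
  mul_self i _ := t_mul_self (by omega) (by omega)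
  braid i _ := braid_of_mul_pow_three_eq_one (t_mul_self (by omega) (by omega))
    (t_mul_self (by omega) (by omega))
    (t_mul_t_pow_eq_one (by omega) (by omega) (by omega) (by
      rw [show i + 1 + 2 - (i + 2) + 2 = 3 by omega]; exact t_two_mul_t_three_pow_three hn))
  commute i j _ _ := commute_of_mul_pow_two_eq_one (t_mul_self (by omega) (by omega))
    (t_mul_self (by omega) (by omega))
    (t_mul_t_pow_eq_one (by omega) (by omega) (by omega)
      (t_two_mul_t_pow_two (by omega) (by omega)))

theorem r_three_eq (hn : 3 ≤ n) : r n 3 = t n 2 * t n 3 * t n 2 := by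
  have h : (r n 2 * r n 3 * r n 2 * r n 3 * r n 2) * r n 3 = 1 := by
    simpa only [pow_succ, pow_zero, one_mul, mul_assoc] using relator_two (n := n)
  calc r n 3 = (r n 3)⁻¹ := (r_inv (by omega) hn).symm
    _ = r n 2 * r n 3 * r n 2 * r n 3 * r n 2 := (eq_inv_of_mul_eq_one_left h).symm
    _ = t n 2 * t n 3 * t n 2 := by rw [t_two (by omega), t]; simp only [mul_assoc]

theorem r_succ_eq {k : ℕ} (hk : 3 ≤ k) (hkn : k + 1 ≤ n) :
    r n (k + 1) = r n k * r n (k - 1) * t n (k + 1) * r n k := by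
  have h : (r n k * r n (k - 1) * t n (k + 1)) * (r n k * r n (k + 1)) = 1 := by
    simpa only [t, mul_assoc] using relator_five hk (by omega)
  rw [eq_inv_of_mul_eq_one_left h, mul_inv_rev, r_inv (by omega) hkn, r_inv (by omega) (by omega),
    mul_assoc, r_mul_self (by omega) (by omega), mul_one]

theorem r_mem_closure_t (hn : 3 ≤ n) {k : ℕ} (h2 : 2 ≤ k) (hk : k ≤ n) :
    r n k ∈ closure ((fun i => t n (i + 2)) '' Set.Iio (n - 1)) := by
  have ht : ∀ j, 2 ≤ j → j ≤ n →
      t n j ∈ closure ((fun i => t n (i + 2)) '' Set.Iio (n - 1)) := fun j h2 hj =>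
    subset_closure ⟨j - 2, Set.mem_Iio.2 (by omega), congrArg (t n) (Nat.sub_add_cancel h2)⟩
  induction k using Nat.strong_induction_on with
  | _ k ih =>
    rcases (show k = 2 ∨ k = 3 ∨ 4 ≤ k by omega) with rfl | rfl | h4
    · exact t_two (by omega) ▸ ht 2 le_rfl (by omega)
    · rw [r_three_eq hn]
      exact mul_mem (mul_mem (ht 2 le_rfl (by omega)) (ht 3 (by omega) hn)) (ht 2 le_rfl (by omega))
    · obtain ⟨k, rfl⟩ : ∃ m, k = m + 1 := ⟨k - 1, by omega⟩
      rw [r_succ_eq (by omega) hk]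
      exact mul_mem (mul_mem (mul_mem (ih k (by omega) (by omega) (by omega))
        (ih (k - 1) (by omega) (by omega) (by omega))) (ht (k + 1) (by omega) hk))
        (ih k (by omega) (by omega) (by omega))

theorem closure_t_eq_top (hn : 3 ≤ n) :
    closure ((fun i => t n (i + 2)) '' Set.Iio (n - 1)) = ⊤ := by
  rw [eq_top_iff, ← PresentedGroup.closure_range_of, closure_le]
  rintro _ ⟨⟨k, h2, hk⟩, rfl⟩
  have : PresentedGroup.of ⟨k, h2, hk⟩ = r n k := by rw [r, rA, dif_pos ⟨h2, hk⟩]; rfl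
  exact this ▸ r_mem_closure_t hn h2 hk

theorem finite_and_card_le (hn : 3 ≤ n) : Finite (Pres n) ∧ Nat.card (Pres n) ≤ n ! := by
  have h := (typeARelations_t hn).encard_closure_le
  rw [closure_t_eq_top hn, coe_top, Nat.sub_add_cancel (by omega)] at h
  obtain ⟨hfin, hcard⟩ := Set.encard_le_coe_iff_finite_ncard_le.1 h
  exact ⟨Set.finite_univ_iff.1 hfin, by rwa [Set.ncard_univ] at hcard⟩

def prefixRev (k i : ℕ) : ℕ := if i < k then k - 1 - i else i

theorem prefixRev_cases (k i : ℕ) :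
    i < k ∧ prefixRev k i + i + 1 = k ∨ k ≤ i ∧ prefixRev k i = i := by
  unfold prefixRev; split_ifs <;> omega

theorem prefixRev_lt {k i : ℕ} (hk : k ≤ n) (hi : i < n) : prefixRev k i < n := by
  rcases prefixRev_cases k i with h | h <;> omega

theorem prefixRev_prefixRev (k i : ℕ) : prefixRev k (prefixRev k i) = i := by
  rcases prefixRev_cases k i with h | h <;>
    rcases prefixRev_cases k (prefixRev k i) with h' | h' <;> omega

def revPerm (n k : ℕ) : Perm (Fin n) :=
  Function.Involutive.toPerm
    (fun i => ⟨prefixRev (min k n) i, prefixRev_lt (min_le_right k n) i.2⟩)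
    fun _ => Fin.ext (prefixRev_prefixRev _ _)

theorem revPerm_val {k : ℕ} (hk : k ≤ n) (i : Fin n) :
    (revPerm n k i : ℕ) = prefixRev k i := by
  simp [revPerm, hk]

theorem revPerm_mul_self (n k : ℕ) : revPerm n k * revPerm n k = 1 :=
  Equiv.ext (Function.Involutive.toPerm_involutive _)

/- Each relator is checked pointwise: after naming the successive images and recording which
branch of `prefixRev` each step takes, what remains is a linear problem for `omega`. -/

theorem revPerm_relator_two (hn : 3 ≤ n) : (revPerm n 2 * revPerm n 3) ^ 3 = 1 := by
  ext i
  simp (disch := omega) only [pow_succ, pow_zero, one_mul, Perm.mul_apply, Perm.one_apply,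
    revPerm_val]
  have h1 := prefixRev_cases 3 i; generalize prefixRev 3 i = x1 at h1 ⊢
  have h2 := prefixRev_cases 2 x1; generalize prefixRev 2 x1 = x2 at h2 ⊢
  have h3 := prefixRev_cases 3 x2; generalize prefixRev 3 x2 = x3 at h3 ⊢
  have h4 := prefixRev_cases 2 x3; generalize prefixRev 2 x3 = x4 at h4 ⊢
  have h5 := prefixRev_cases 3 x4; generalize prefixRev 3 x4 = x5 at h5 ⊢
  have h6 := prefixRev_cases 2 x5; generalize prefixRev 2 x5 = x6 at h6 ⊢
  omega

theorem revPerm_relator_three {k : ℕ} (hk : 4 ≤ k) (hkn : k ≤ n) :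
    (revPerm n 2 * revPerm n k) ^ 4 = 1 := by
  ext i
  simp (disch := omega) only [pow_succ, pow_zero, one_mul, Perm.mul_apply, Perm.one_apply,
    revPerm_val]
  have h1 := prefixRev_cases k i; generalize prefixRev k i = x1 at h1 ⊢
  have h2 := prefixRev_cases 2 x1; generalize prefixRev 2 x1 = x2 at h2 ⊢
  have h3 := prefixRev_cases k x2; generalize prefixRev k x2 = x3 at h3 ⊢
  have h4 := prefixRev_cases 2 x3; generalize prefixRev 2 x3 = x4 at h4 ⊢
  have h5 := prefixRev_cases k x4; generalize prefixRev k x4 = x5 at h5 ⊢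
  have h6 := prefixRev_cases 2 x5; generalize prefixRev 2 x5 = x6 at h6 ⊢
  have h7 := prefixRev_cases k x6; generalize prefixRev k x6 = x7 at h7 ⊢
  have h8 := prefixRev_cases 2 x7; generalize prefixRev 2 x7 = x8 at h8 ⊢
  omega

theorem revPerm_relator_four {l k : ℕ} (hl : 4 ≤ l) (hln : l ≤ n) (hk : 3 ≤ k)
    (hkl : k ≤ l - 1) :
    revPerm n l * revPerm n (l - k + 2) * revPerm n 2 * revPerm n (l - k + 2) *
      revPerm n l * revPerm n k * revPerm n 2 * revPerm n k = 1 := by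
  ext i
  simp (disch := omega) only [Perm.mul_apply, Perm.one_apply, revPerm_val]
  have h1 := prefixRev_cases k i; generalize prefixRev k i = x1 at h1 ⊢
  have h2 := prefixRev_cases 2 x1; generalize prefixRev 2 x1 = x2 at h2 ⊢
  have h3 := prefixRev_cases k x2; generalize prefixRev k x2 = x3 at h3 ⊢
  have h4 := prefixRev_cases l x3; generalize prefixRev l x3 = x4 at h4 ⊢
  have h5 := prefixRev_cases (l - k + 2) x4; generalize prefixRev (l - k + 2) x4 = x5 at h5 ⊢
  have h6 := prefixRev_cases 2 x5; generalize prefixRev 2 x5 = x6 at h6 ⊢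
  have h7 := prefixRev_cases (l - k + 2) x6; generalize prefixRev (l - k + 2) x6 = x7 at h7 ⊢
  have h8 := prefixRev_cases l x7; generalize prefixRev l x7 = x8 at h8 ⊢
  omega

theorem revPerm_relator_five {k : ℕ} (hk : 3 ≤ k) (hkn : k ≤ n - 1) :
    revPerm n k * revPerm n (k - 1) * revPerm n (k + 1) * revPerm n 2 *
      revPerm n (k + 1) * revPerm n k * revPerm n (k + 1) = 1 := by
  ext i
  simp (disch := omega) only [Perm.mul_apply, Perm.one_apply, revPerm_val]
  have h1 := prefixRev_cases (k + 1) i; generalize prefixRev (k + 1) i = x1 at h1 ⊢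
  have h2 := prefixRev_cases k x1; generalize prefixRev k x1 = x2 at h2 ⊢
  have h3 := prefixRev_cases (k + 1) x2; generalize prefixRev (k + 1) x2 = x3 at h3 ⊢
  have h4 := prefixRev_cases 2 x3; generalize prefixRev 2 x3 = x4 at h4 ⊢
  have h5 := prefixRev_cases (k + 1) x4; generalize prefixRev (k + 1) x4 = x5 at h5 ⊢
  have h6 := prefixRev_cases (k - 1) x5; generalize prefixRev (k - 1) x5 = x6 at h6 ⊢
  have h7 := prefixRev_cases k x6; generalize prefixRev k x6 = x7 at h7 ⊢
  omega

theorem revPerm_relator_six {k : ℕ} (hk : 3 ≤ k) (hkn : k ≤ n - 1) :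
    (revPerm n k * revPerm n (k - 1)) ^ 2 * revPerm n (k + 1) * revPerm n 3 *
      revPerm n (k + 1) * revPerm n (k - 1) * revPerm n (k + 1) = 1 := by
  ext i
  simp (disch := omega) only [pow_two, Perm.mul_apply, Perm.one_apply, revPerm_val]
  have h1 := prefixRev_cases (k + 1) i; generalize prefixRev (k + 1) i = x1 at h1 ⊢
  have h2 := prefixRev_cases (k - 1) x1; generalize prefixRev (k - 1) x1 = x2 at h2 ⊢
  have h3 := prefixRev_cases (k + 1) x2; generalize prefixRev (k + 1) x2 = x3 at h3 ⊢
  have h4 := prefixRev_cases 3 x3; generalize prefixRev 3 x3 = x4 at h4 ⊢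
  have h5 := prefixRev_cases (k + 1) x4; generalize prefixRev (k + 1) x4 = x5 at h5 ⊢
  have h6 := prefixRev_cases (k - 1) x5; generalize prefixRev (k - 1) x5 = x6 at h6 ⊢
  have h7 := prefixRev_cases k x6; generalize prefixRev k x6 = x7 at h7 ⊢
  have h8 := prefixRev_cases (k - 1) x7; generalize prefixRev (k - 1) x7 = x8 at h8 ⊢
  have h9 := prefixRev_cases k x8; generalize prefixRev k x8 = x9 at h9 ⊢
  omega

theorem revPerm_mul_revPerm_two_mul_revPerm {m : ℕ} (i : Fin m) :
    revPerm (m + 1) (i + 2) * revPerm (m + 1) 2 * revPerm (m + 1) (i + 2) =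
      swap i.castSucc i.succ := by
  have hi := i.isLt
  ext j
  simp (disch := omega) only [Perm.mul_apply, revPerm_val, swap_apply_def, apply_ite Fin.val,
    Fin.ext_iff, Fin.val_castSucc, Fin.val_succ]
  have h1 := prefixRev_cases (i + 2) j; generalize prefixRev (i + 2) j = x1 at h1 ⊢
  have h2 := prefixRev_cases 2 x1; generalize prefixRev 2 x1 = x2 at h2 ⊢
  have h3 := prefixRev_cases (i + 2) x2; generalize prefixRev (i + 2) x2 = x3 at h3 ⊢
  split_ifs <;> omega

theorem lift_rA {k : ℕ} (h2 : 2 ≤ k) (hk : k ≤ n) :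
    FreeGroup.lift (fun x : GenA n => revPerm n x.1) (rA n k) = revPerm n k := by
  rw [rA, dif_pos ⟨h2, hk⟩]
  exact FreeGroup.lift_apply_of

theorem lift_relsA (hn : 3 ≤ n) (w : FreeGroup (GenA n)) (hw : w ∈ relsA n) :
    FreeGroup.lift (fun x : GenA n => revPerm n x.1) w = 1 := by
  rcases hw with ⟨k, h2, hk, rfl⟩ | rfl | ⟨k, h4, hk, rfl⟩ |
    ⟨l, k, hl, hln, hk, hkl, rfl⟩ | ⟨k, hk, hkn, rfl⟩ | ⟨k, hk, hkn, rfl⟩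
  · rw [map_pow, lift_rA h2 hk, pow_two, revPerm_mul_self]
  · rw [map_pow, map_mul, lift_rA le_rfl (by omega), lift_rA (by omega) hn]
    exact revPerm_relator_two hn
  · rw [map_pow, map_mul, lift_rA le_rfl (by omega), lift_rA (by omega) hk]
    exact revPerm_relator_three h4 hk
  · simp only [map_mul]
    rw [lift_rA (k := l) (by omega) hln, lift_rA (k := l - k + 2) (by omega) (by omega),
      lift_rA le_rfl (by omega), lift_rA (k := k) (by omega) (by omega)]
    exact revPerm_relator_four hl hln hk hkl
  · simp only [map_mul]
    rw [lift_rA (k := k) (by omega) (by omega), lift_rA (k := k - 1) (by omega) (by omega),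
      lift_rA (k := k + 1) (by omega) (by omega), lift_rA le_rfl (by omega)]
    exact revPerm_relator_five hk hkn
  · simp only [map_mul, map_pow]
    rw [lift_rA (k := k) (by omega) (by omega), lift_rA (k := k - 1) (by omega) (by omega),
      lift_rA (k := k + 1) (by omega) (by omega), lift_rA (k := 3) (by omega) (by omega)]
    exact revPerm_relator_six hk hkn

def toPerm (hn : 3 ≤ n) : Pres n →* Perm (Fin n) :=
  PresentedGroup.toGroup (lift_relsA hn)

theorem toPerm_r (hn : 3 ≤ n) {k : ℕ} (h2 : 2 ≤ k) (hk : k ≤ n) :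
    toPerm hn (r n k) = revPerm n k :=
  lift_rA h2 hk

theorem toPerm_surjective {m : ℕ} (hm : 3 ≤ m + 1) : Function.Surjective (toPerm hm) := by
  rw [← MonoidHom.mrange_eq_top, eq_top_iff, ← Perm.mclosure_swap_castSucc_succ,
    Submonoid.closure_le]
  rintro _ ⟨i, rfl⟩
  refine ⟨t (m + 1) (i + 2), ?_⟩
  rw [t, map_mul, map_mul, toPerm_r hm (by omega) (by omega), toPerm_r hm le_rfl (by omega),
    revPerm_mul_revPerm_two_mul_revPerm]

end PrefixReversal

theorem stmt0 (n : ℕ) (hn : 3 < n) :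
    Nonempty (PresentedGroup (relsA n) ≃* Equiv.Perm (Fin n)) := by
  obtain ⟨m, rfl⟩ : ∃ m, n = m + 1 := ⟨n - 1, by omega⟩
  obtain ⟨hfinite, hcard⟩ := PrefixReversal.finite_and_card_le (n := m + 1) (by omega)
  refine ⟨MulEquiv.ofBijective _
    ((PrefixReversal.toPerm_surjective (by omega)).bijective_of_nat_card_le ?_)⟩
  rwa [Nat.card_perm, Nat.card_fin]
end

section
/- Let n > 3. The group presented by generators r_1, r_2, …, r_n subject to the relators (Rb1)–(Rb8) is isomorphic to the Coxeter group of type B_n (the hyperoctahedral group of signed permutations of degree n), i.e. the group with generators s_0, s_1, …, s_{n-1} and relators s_i^2 for i ∈ [0,n-1], (s_0 s_1)^4, (s_i s_{i+1})^3 for i ∈ [1,n-2], and (s_i s_j)^2 for i ∈ [0,n-3] and j ∈ [i+2,n-1]. -/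
/-- Generator indices `r_1, …, r_n` for the prefix-reversal presentation of `B_n`. -/
def GenB (n : ℕ) : Type := {k : ℕ // 1 ≤ k ∧ k ≤ n}

/-- The generator `r_k` as an element of the free group (equal to `1` out of range;
all occurrences in the relators below are in range). -/
def rB (n : ℕ) (k : ℕ) : FreeGroup (GenB n) :=
  if h : 1 ≤ k ∧ k ≤ n then FreeGroup.of ⟨k, h⟩ else 1

/-- The relators (Rb1)–(Rb8). -/
def relsB (n : ℕ) : Set (FreeGroup (GenB n)) :=
  {w | (∃ k, 1 ≤ k ∧ k ≤ n ∧ w = (rB n k) ^ 2) ∨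
       (w = (rB n 2 * rB n 3) ^ 6) ∨
       (∃ k, 2 ≤ k ∧ k ≤ n ∧ w = (rB n 1 * rB n k) ^ 4) ∨
       (∃ k, 4 ≤ k ∧ k ≤ n ∧ w = (rB n 1 * rB n 2 * rB n 1 * rB n k) ^ 4) ∨
       (∃ k, 3 ≤ k ∧ k ≤ n ∧ w = (rB n k * rB n 1 * rB n k * rB n 2) ^ 2) ∨
       (∃ k, 2 ≤ k ∧ k ≤ n - 1 ∧
         w = rB n k * rB n 1 * rB n 2 * rB n 1 * rB n k * rB n (k + 1) *
             rB n 2 * rB n 3 * rB n 2 * rB n 1 * rB n (k + 1)) ∨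
       (∃ k, 2 ≤ k ∧ k ≤ n - 1 ∧
         w = rB n (k + 1) * rB n 1 * rB n 2 * rB n 1 * rB n (k + 1) *
             rB n (k - 1) * rB n k * rB n (k + 1) * rB n k) ∨
       (∃ k l, 2 ≤ k ∧ k ≤ n - 2 ∧ k + 2 ≤ l ∧ l ≤ n ∧
         w = rB n k * rB n 1 * rB n 2 * rB n 1 * rB n k * rB n l *
             rB n (l - k + 2) * rB n 1 * rB n 2 * rB n 1 * rB n (l - k + 2) * rB n l)}

/-- Generator indices `s_0, …, s_{n-1}` for the Coxeter presentation of `B_n`. -/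
def CoxGenB (n : ℕ) : Type := {i : ℕ // i ≤ n - 1}

/-- The generator `s_i` as an element of the free group. -/
def sB (n : ℕ) (i : ℕ) : FreeGroup (CoxGenB n) :=
  if h : i ≤ n - 1 then FreeGroup.of ⟨i, h⟩ else 1

/-- The type `B_n` Coxeter relators. -/
def coxRelsB (n : ℕ) : Set (FreeGroup (CoxGenB n)) :=
  {w | (∃ i, i ≤ n - 1 ∧ w = (sB n i) ^ 2) ∨
       (w = (sB n 0 * sB n 1) ^ 4) ∨
       (∃ i, 1 ≤ i ∧ i ≤ n - 2 ∧ w = (sB n i * sB n (i + 1)) ^ 3) ∨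
       (∃ i j, i ≤ n - 3 ∧ i + 2 ≤ j ∧ j ≤ n - 1 ∧ w = (sB n i * sB n j) ^ 2)}

/-!
Let `s_0` be the sign change of the first entry and `s_i` the transposition of entries `i` and
`i + 1` of a signed permutation. The prefix reversal `r_k` is the word `P_{k-1} ⋯ P_1 P_0` with
`P_j = s_0 s_1 ⋯ s_j`, and conversely `s_0 = r_1`, `s_i = r_{i-1} r_i r_{i+1} r_i` (with `r_0 = 1`).
These substitutions induce mutually inverse homomorphisms between the two presented groups.

That the words `r_k` satisfy (Rb1)–(Rb8) comes from how conjugation by the involution `r_k` acts: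
`r_k s_i r_k = s_{k-i}` for `0 < i < k`, and `r_k s_0 r_k` is the sign change of entry `k`.
Conversely, (Rb7), (Rb6) and (Rb8) present each `s_i` with `i ≥ 2` as a conjugate, by a single
`r_j`, of `s_1 = r_1 r_2 r_1`, of `s_2`, or of `r_m s_1 r_m`; this reduces the Coxeter relations to
(Rb3)–(Rb5) and to the identity `(r_1 r_3 r_2)^3 = 1`, which is `(s_1 s_2)^3 = 1`.
-/

section Involutions

variable {G : Type*} [Group G] {x y g : G}

theorem mul_mul_cancel_of_mul_self (hg : g * g = 1) (x : G) : g * (g * x) = x := by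
  rw [← mul_assoc, hg, one_mul]

theorem commute_of_mul_pow_two (hx : x * x = 1) (hy : y * y = 1) (h : (x * y) ^ 2 = 1) :
    Commute x y := by
  have hxy : x * y = (x * y)⁻¹ := (inv_eq_of_mul_eq_one_right (by rwa [← pow_two])).symm
  rw [mul_inv_rev, inv_eq_of_mul_eq_one_right hx, inv_eq_of_mul_eq_one_right hy] at hxy
  exact hxy

theorem conj_mul_self (hg : g * g = 1) (hx : x * x = 1) : g * x * g * (g * x * g) = 1 := by
  calc g * x * g * (g * x * g) = g * (x * (g * g) * x) * g := by group
    _ = 1 := by rw [hg, mul_one, hx, mul_one, hg]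

theorem commute_conj_of_mul_pow_four (hx : x * x = 1) (hy : y * y = 1) (h : (x * y) ^ 4 = 1) :
    Commute x (y * x * y) := by
  refine commute_of_mul_pow_two hx (conj_mul_self hy hx) ?_
  rw [← h]
  simp only [pow_succ, pow_zero, one_mul, mul_assoc]

theorem braid_of_mul_pow_three (hx : x * x = 1) (hy : y * y = 1) (h : (x * y) ^ 3 = 1) :
    x * y * x = y * x * y := by
  have h' : x * y * x * (y * x * y) = 1 := by
    rw [← h]
    simp only [pow_succ, pow_zero, one_mul, mul_assoc]
  rw [eq_inv_of_mul_eq_one_right h', mul_inv_rev, mul_inv_rev, inv_eq_of_mul_eq_one_right hx,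
    inv_eq_of_mul_eq_one_right hy, mul_assoc]

theorem Commute.mul_pow_two_eq_one (hxy : Commute x y) (hx : x * x = 1) (hy : y * y = 1) :
    (x * y) ^ 2 = 1 := by
  rw [pow_two, hxy.symm.mul_mul_mul_comm, hx, hy, one_mul]

theorem conj_pow_of_mul_self (hg : g * g = 1) (x : G) (m : ℕ) :
    (g * x * g) ^ m = g * x ^ m * g := by
  simpa only [inv_eq_of_mul_eq_one_right hg] using conj_pow (a := g) (b := x) (i := m)

theorem SemiconjBy.conj_eq_of_mul_self {x y : G} (h : SemiconjBy g x y) (hg : g * g = 1) :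
    g * x * g = y := by
  rw [h.eq, mul_assoc, hg, mul_one]

theorem eq_of_mul_eq_one_of_mul_self (hxy : x * y = 1) (hx : x * x = 1) : y = x := by
  rw [← inv_eq_of_mul_eq_one_right hxy, inv_eq_of_mul_eq_one_right hx]

theorem commute_conj_iff_of_mul_self (hg : g * g = 1) :
    Commute (g * x * g) y ↔ Commute x (g * y * g) := by
  have hy : g * (g * y * g) * g = y := by
    calc g * (g * y * g) * g = g * g * y * (g * g) := by group
      _ = y := by rw [hg, one_mul, mul_one]
  have := Commute.conj_iff g (a := x) (b := g * y * g)
  rwa [inv_eq_of_mul_eq_one_right hg, hy] at this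

end Involutions

theorem PresentedGroup.nonempty_mulEquiv {α β : Type*} {R : Set (FreeGroup α)}
    {S : Set (FreeGroup β)} {f : α → PresentedGroup S} {g : β → PresentedGroup R}
    (hf : ∀ w ∈ R, FreeGroup.lift f w = 1) (hg : ∀ w ∈ S, FreeGroup.lift g w = 1)
    (hgf : ∀ a, PresentedGroup.toGroup hg (f a) = PresentedGroup.of a)
    (hfg : ∀ b, PresentedGroup.toGroup hf (g b) = PresentedGroup.of b) :
    Nonempty (PresentedGroup R ≃* PresentedGroup S) :=
  ⟨MonoidHom.toMulEquiv (PresentedGroup.toGroup hf) (PresentedGroup.toGroup hg)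
    (PresentedGroup.ext fun a => by simp [hgf]) (PresentedGroup.ext fun b => by simp [hfg])⟩

namespace CoxeterB

section Words

variable {G : Type*} [Group G]

def prefixProd (s : ℕ → G) : ℕ → G
  | 0 => s 0
  | k + 1 => prefixProd s k * s (k + 1)

def prefixReversal (s : ℕ → G) : ℕ → G
  | 0 => 1
  | k + 1 => prefixProd s k * prefixReversal s k

/-- The sign change of entry `m + 1` (indices of `s` start at `0`). -/
def signChange (s : ℕ → G) : ℕ → G
  | 0 => s 0
  | m + 1 => s (m + 1) * signChange s m * s (m + 1)

/-- `r 0` plays the role of the empty reversal `1`. -/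
def coxeterGen (r : ℕ → G) : ℕ → G
  | 0 => r 1
  | i + 1 => r i * r (i + 1) * r (i + 2) * r (i + 1)

variable (s : ℕ → G)

@[simp] theorem prefixProd_zero : prefixProd s 0 = s 0 := rfl
@[simp] theorem prefixProd_succ (k : ℕ) : prefixProd s (k + 1) = prefixProd s k * s (k + 1) := rfl
@[simp] theorem prefixReversal_zero : prefixReversal s 0 = 1 := rfl
theorem prefixReversal_succ (k : ℕ) :
    prefixReversal s (k + 1) = prefixProd s k * prefixReversal s k := rfl
@[simp] theorem signChange_zero : signChange s 0 = s 0 := rfl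
theorem signChange_succ (m : ℕ) :
    signChange s (m + 1) = s (m + 1) * signChange s m * s (m + 1) := rfl

theorem prefixReversal_one : prefixReversal s 1 = s 0 := mul_one _

theorem prefixReversal_two : prefixReversal s 2 = s 0 * s 1 * s 0 := by
  simp [prefixReversal_succ]

theorem prefixReversal_three : prefixReversal s 3 = s 0 * s 1 * s 2 * (s 0 * s 1 * s 0) := by
  simp [prefixReversal_succ]

variable {H : Type*} [Group H] {s}

theorem map_prefixProd (f : G →* H) {t : ℕ → H} {k : ℕ} (hst : ∀ i ≤ k, f (s i) = t i) :
    f (prefixProd s k) = prefixProd t k := by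
  induction k with
  | zero => exact hst 0 le_rfl
  | succ k ih => simp [ih fun i hi => hst i (by omega), hst (k + 1) le_rfl]

theorem map_prefixReversal (f : G →* H) {t : ℕ → H} {k : ℕ}
    (hst : ∀ i < k, f (s i) = t i) :
    f (prefixReversal s k) = prefixReversal t k := by
  induction k with
  | zero => simp
  | succ k ih =>
    simp [prefixReversal_succ, ih fun i hi => hst i (by omega),
      map_prefixProd f (k := k) fun i hi => hst i (by omega)]

theorem map_coxeterGen (f : G →* H) {r : ℕ → G} {t : ℕ → H} {i : ℕ}
    (hrt : ∀ j ≤ i + 1, f (r j) = t j) : f (coxeterGen r i) = coxeterGen t i := by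
  rcases i with _ | i
  · exact hrt 1 le_rfl
  · simp only [coxeterGen, map_mul, hrt i (by omega), hrt (i + 1) (by omega), hrt (i + 2) le_rfl]

end Words

structure IsCoxeterB {G : Type*} [Group G] (s : ℕ → G) (n : ℕ) : Prop where
  involution : ∀ i ≤ n - 1, s i * s i = 1
  rel_zero_one : (s 0 * s 1) ^ 4 = 1
  rel_succ : ∀ i, 1 ≤ i → i + 1 ≤ n - 1 → (s i * s (i + 1)) ^ 3 = 1
  rel_far : ∀ i j, i + 2 ≤ j → j ≤ n - 1 → (s i * s j) ^ 2 = 1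

/-- The relators (Rb1)–(Rb8) as relations, the field `rbi` being (Rbi), together with the
convention `r 0 = 1` (the empty reversal). -/
structure IsReversalB {G : Type*} [Group G] (r : ℕ → G) (n : ℕ) : Prop where
  zero : r 0 = 1
  rb1 : ∀ k ≤ n, r k * r k = 1
  rb2 : (r 2 * r 3) ^ 6 = 1
  rb3 : ∀ k, 2 ≤ k → k ≤ n → (r 1 * r k) ^ 4 = 1
  rb4 : ∀ k, 4 ≤ k → k ≤ n → (r 1 * r 2 * r 1 * r k) ^ 4 = 1
  rb5 : ∀ k, 3 ≤ k → k ≤ n → (r k * r 1 * r k * r 2) ^ 2 = 1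
  rb6 : ∀ k, 2 ≤ k → k + 1 ≤ n →
    r k * r 1 * r 2 * r 1 * r k * r (k + 1) * r 2 * r 3 * r 2 * r 1 * r (k + 1) = 1
  rb7 : ∀ k, 2 ≤ k → k + 1 ≤ n →
    r (k + 1) * r 1 * r 2 * r 1 * r (k + 1) * r (k - 1) * r k * r (k + 1) * r k = 1
  rb8 : ∀ k l, 2 ≤ k → k + 2 ≤ l → l ≤ n →
    r k * r 1 * r 2 * r 1 * r k * r l * r (l - k + 2) * r 1 * r 2 * r 1 * r (l - k + 2) * r l = 1

namespace IsCoxeterB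

variable {G : Type*} [Group G] {s : ℕ → G} {n : ℕ}

theorem commute (h : IsCoxeterB s n) {i j : ℕ} (hij : i + 2 ≤ j) (hj : j ≤ n - 1) :
    Commute (s i) (s j) :=
  commute_of_mul_pow_two (h.involution i (by omega)) (h.involution j hj) (h.rel_far i j hij hj)

theorem braid (h : IsCoxeterB s n) {i : ℕ} (hi : 1 ≤ i) (hin : i + 1 ≤ n - 1) :
    s i * s (i + 1) * s i = s (i + 1) * s i * s (i + 1) :=
  braid_of_mul_pow_three (h.involution i (by omega)) (h.involution (i + 1) hin)
    (h.rel_succ i hi hin)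

theorem commute_zero_signChange_one (h : IsCoxeterB s n) (hn : 2 ≤ n) :
    Commute (s 0) (signChange s 1) :=
  commute_conj_of_mul_pow_four (h.involution 0 (by omega)) (h.involution 1 (by omega))
    h.rel_zero_one

theorem commute_prefixProd (h : IsCoxeterB s n) {j k : ℕ} (hkj : k + 2 ≤ j) (hj : j ≤ n - 1) :
    Commute (s j) (prefixProd s k) := by
  induction k with
  | zero => exact (h.commute hkj hj).symm
  | succ k ih => exact (ih (by omega)).mul_right (h.commute hkj hj).symm

theorem commute_prefixReversal (h : IsCoxeterB s n) {j k : ℕ} (hkj : k + 1 ≤ j)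
    (hj : j ≤ n - 1) : Commute (s j) (prefixReversal s k) := by
  induction k with
  | zero => exact Commute.one_right _
  | succ k ih => exact (h.commute_prefixProd (by omega) hj).mul_right (ih (by omega))

theorem signChange_mul_self (h : IsCoxeterB s n) {m : ℕ} (hm : m ≤ n - 1) :
    signChange s m * signChange s m = 1 := by
  induction m with
  | zero => exact h.involution 0 (by omega)
  | succ m ih => exact conj_mul_self (h.involution (m + 1) hm) (ih (by omega))

theorem commute_signChange_of_add_two_le (h : IsCoxeterB s n) {j m : ℕ} (hmj : m + 2 ≤ j)
    (hj : j ≤ n - 1) : Commute (s j) (signChange s m) := by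
  induction m with
  | zero => exact (h.commute hmj hj).symm
  | succ m ih =>
    have hc := (h.commute hmj hj).symm
    exact (hc.mul_right (ih (by omega))).mul_right hc

theorem commute_signChange_succ (h : IsCoxeterB s n) {m : ℕ} (hm : m + 1 ≤ n - 1) :
    Commute (s m) (signChange s (m + 1)) := by
  rcases m with _ | t
  · exact h.commute_zero_signChange_one (by omega)
  have hb := h.braid (i := t + 1) (by omega) hm
  have hc := h.commute_signChange_of_add_two_le (m := t) (j := t + 2) le_rfl hm
  show s (t + 1) * (s (t + 2) * (s (t + 1) * signChange s t * s (t + 1)) * s (t + 2)) =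
    s (t + 2) * (s (t + 1) * signChange s t * s (t + 1)) * s (t + 2) * s (t + 1)
  calc _ = s (t + 1) * s (t + 2) * s (t + 1) * signChange s t * (s (t + 1) * s (t + 2)) := by
        group
    _ = s (t + 2) * s (t + 1) * (s (t + 2) * signChange s t) * (s (t + 1) * s (t + 2)) := by
        rw [hb]; group
    _ = s (t + 2) * s (t + 1) * signChange s t * (s (t + 2) * s (t + 1) * s (t + 2)) := by
        rw [hc.eq]; group
    _ = _ := by rw [← hb]; group

theorem commute_signChange_of_lt (h : IsCoxeterB s n) {j m : ℕ} (hjm : j < m)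
    (hm : m ≤ n - 1) : Commute (s j) (signChange s m) := by
  induction m with
  | zero => omega
  | succ m ih =>
    rcases Nat.lt_or_eq_of_le (Nat.le_of_lt_succ hjm) with hjm | rfl
    · have hc := h.commute (i := j) (j := m + 1) (by omega) hm
      exact (hc.mul_right (ih hjm (by omega))).mul_right hc
    · exact h.commute_signChange_succ hm

theorem commute_signChange_signChange (h : IsCoxeterB s n) {m k : ℕ} (hmk : m < k)
    (hk : k ≤ n - 1) : Commute (signChange s m) (signChange s k) := by
  induction m with
  | zero => exact h.commute_signChange_of_lt hmk hk
  | succ m ih =>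
    have hc := h.commute_signChange_of_lt hmk hk
    exact (hc.mul_left (ih (by omega))).mul_left hc

theorem commute_prefixProd_signChange (h : IsCoxeterB s n) {m k : ℕ} (hmk : m < k)
    (hk : k ≤ n - 1) : Commute (prefixProd s m) (signChange s k) := by
  induction m with
  | zero => exact h.commute_signChange_of_lt hmk hk
  | succ m ih => exact (ih (by omega)).mul_left (h.commute_signChange_of_lt hmk hk)

theorem semiconjBy_signChange (h : IsCoxeterB s n) {m : ℕ} (hm : m + 1 ≤ n - 1) :
    SemiconjBy (s (m + 1)) (signChange s m) (signChange s (m + 1)) := by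
  rw [SemiconjBy, signChange_succ, mul_assoc _ (s (m + 1)), h.involution _ hm, mul_one]

theorem semiconjBy_prefixProd (h : IsCoxeterB s n) {j k : ℕ} (hj : 1 ≤ j) (hjk : j < k)
    (hk : k ≤ n - 1) : SemiconjBy (prefixProd s k) (s j) (s (j + 1)) := by
  induction k with
  | zero => omega
  | succ k ih =>
    rcases Nat.lt_or_eq_of_le (Nat.le_of_lt_succ hjk) with hjk | rfl
    · exact (ih hjk (by omega)).mul_left (h.commute (by omega) hk).symm
    · obtain ⟨t, rfl⟩ : ∃ t, j = t + 1 := ⟨j - 1, by omega⟩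
      rw [prefixProd_succ, prefixProd_succ, mul_assoc]
      exact SemiconjBy.mul_left (h.commute_prefixProd le_rfl hk).symm
        (by simpa only [SemiconjBy, mul_assoc] using h.braid hj hk)

theorem inv_eq (h : IsCoxeterB s n) {i : ℕ} (hi : i ≤ n - 1) : (s i)⁻¹ = s i :=
  inv_eq_of_mul_eq_one_right (h.involution i hi)

theorem prefixReversal_succ_eq_mul_inv (h : IsCoxeterB s n) {k : ℕ} (hk : k ≤ n - 1) :
    prefixReversal s (k + 1) = prefixReversal s k * (prefixProd s k)⁻¹ := by
  induction k with
  | zero => simp [prefixReversal_one, h.inv_eq (i := 0) (by omega)]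
  | succ k ih =>
    calc prefixReversal s (k + 2)
        = prefixProd s k * s (k + 1) * (prefixReversal s k * (prefixProd s k)⁻¹) := by
          rw [prefixReversal_succ, ih (by omega), prefixProd_succ]
      _ = prefixProd s k * (s (k + 1) * prefixReversal s k) * (prefixProd s k)⁻¹ := by group
      _ = prefixReversal s (k + 1) * (prefixProd s (k + 1))⁻¹ := by
          rw [(h.commute_prefixReversal le_rfl hk).eq, prefixReversal_succ, prefixProd_succ,
            mul_inv_rev, h.inv_eq hk]
          group

theorem prefixReversal_mul_self (h : IsCoxeterB s n) {k : ℕ} (hk : k ≤ n) :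
    prefixReversal s k * prefixReversal s k = 1 := by
  induction k with
  | zero => simp
  | succ k ih =>
    calc prefixReversal s (k + 1) * prefixReversal s (k + 1)
        = prefixProd s k * (prefixReversal s k * prefixReversal s k) * (prefixProd s k)⁻¹ := by
          nth_rw 2 [h.prefixReversal_succ_eq_mul_inv (by omega)]
          rw [prefixReversal_succ]; group
      _ = 1 := by rw [ih (by omega), mul_one, mul_inv_cancel]

theorem semiconjBy_prefixReversal (h : IsCoxeterB s n) {i k : ℕ} (hi : 1 ≤ i) (hik : i < k)
    (hk : k ≤ n) : SemiconjBy (prefixReversal s k) (s i) (s (k - i)) := by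
  induction k generalizing i with
  | zero => omega
  | succ k ih =>
    have step : ∀ j, 1 ≤ j → j < k →
        SemiconjBy (prefixReversal s (k + 1)) (s j) (s (k + 1 - j)) := fun j hj hjk => by
      rw [show k + 1 - j = k - j + 1 by omega]
      exact (h.semiconjBy_prefixProd (by omega) (by omega) (by omega)).mul_left
        (ih hj hjk (by omega))
    rcases Nat.lt_or_eq_of_le (Nat.le_of_lt_succ hik) with hik | rfl
    · exact step i hi hik
    rcases Nat.lt_or_ge i 2 with hi2 | hi2
    · obtain rfl : i = 1 := by omega
      have := (h.commute_zero_signChange_one (by omega)).eq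
      simp only [signChange_succ, signChange_zero, zero_add, ← mul_assoc] at this
      show SemiconjBy (prefixReversal s 2) (s 1) (s 1)
      simpa only [SemiconjBy, prefixReversal_two, ← mul_assoc] using this
    -- an involution sending `s 1` to `s i` also sends `s i` to `s 1`
    have h1 := (step 1 le_rfl hi2).inv_symm_left
    rw [inv_eq_of_mul_eq_one_right (h.prefixReversal_mul_self hk), Nat.add_sub_cancel] at h1
    rwa [show i + 1 - i = 1 by omega]

theorem semiconjBy_prefixReversal_zero (h : IsCoxeterB s n) {k : ℕ} (hk1 : 1 ≤ k)
    (hk : k ≤ n) : SemiconjBy (prefixReversal s k) (s 0) (signChange s (k - 1)) := by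
  induction k with
  | zero => omega
  | succ k ih =>
    rcases k with _ | t
    · show SemiconjBy (prefixReversal s 1) (s 0) (signChange s 0)
      rw [prefixReversal_one, signChange_zero]
      exact Commute.refl (s 0)
    have hP : SemiconjBy (prefixProd s (t + 1)) (signChange s t) (signChange s (t + 1)) :=
      SemiconjBy.mul_left (h.commute_prefixProd_signChange (Nat.lt_succ_self t) (by omega))
        (h.semiconjBy_signChange (by omega))
    exact hP.mul_left (ih (by omega) (by omega))

theorem prefixReversal_conj (h : IsCoxeterB s n) {i k : ℕ} (hi : 1 ≤ i) (hik : i < k)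
    (hk : k ≤ n) : prefixReversal s k * s i * prefixReversal s k = s (k - i) :=
  (h.semiconjBy_prefixReversal hi hik hk).conj_eq_of_mul_self (h.prefixReversal_mul_self hk)

theorem prefixReversal_conj_zero (h : IsCoxeterB s n) {k : ℕ} (hk1 : 1 ≤ k) (hk : k ≤ n) :
    prefixReversal s k * s 0 * prefixReversal s k = signChange s (k - 1) :=
  (h.semiconjBy_prefixReversal_zero hk1 hk).conj_eq_of_mul_self (h.prefixReversal_mul_self hk)

theorem coxeterGen_prefixReversal (h : IsCoxeterB s n) {i : ℕ} (hi : i ≤ n - 1) :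
    coxeterGen (prefixReversal s) i = s i := by
  rcases i with _ | k
  · exact prefixReversal_one s
  calc coxeterGen (prefixReversal s) (k + 1)
        = prefixReversal s k * prefixReversal s (k + 1) * prefixProd s (k + 1) *
          (prefixReversal s (k + 1) * prefixReversal s (k + 1)) := by
        rw [coxeterGen, prefixReversal_succ s (k + 1)]; group
    _ = prefixReversal s k * prefixReversal s k *
          ((prefixProd s k)⁻¹ * prefixProd s (k + 1)) := by
        rw [h.prefixReversal_mul_self (by omega), mul_one,
          h.prefixReversal_succ_eq_mul_inv (by omega)]
        group
    _ = s (k + 1) := by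
        rw [h.prefixReversal_mul_self (by omega), prefixProd_succ, inv_mul_cancel_left, one_mul]

theorem prefixReversal_two_mul_three (h : IsCoxeterB s n) (hn : 3 ≤ n) :
    prefixReversal s 2 * prefixReversal s 3 = s 2 * s 1 * s 0 := by
  have h0 := h.involution 0 (by omega)
  calc _ = s 0 * (s 1 * (s 0 * s 0) * s 1) * (s 2 * (s 0 * s 1 * s 0)) := by
        rw [prefixReversal_two, prefixReversal_three]; group
    _ = s 0 * s 2 * (s 0 * s 1 * s 0) := by
        rw [h0, mul_one, h.involution 1 (by omega)]; group
    _ = s 2 * s 1 * s 0 := by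
        rw [(h.commute (i := 0) (j := 2) le_rfl (by omega)).eq, mul_assoc (s 2),
          ← mul_assoc (s 0), ← mul_assoc (s 0), h0]
        group

theorem prefixReversal_one_two_one (h : IsCoxeterB s n) :
    prefixReversal s 1 * prefixReversal s 2 * prefixReversal s 1 = s 1 := by
  have h0 := h.involution 0 (Nat.zero_le _)
  calc _ = s 0 * s 0 * s 1 * (s 0 * s 0) := by
        rw [prefixReversal_one, prefixReversal_two]; group
    _ = s 1 := by rw [h0, one_mul, mul_one]

theorem prefixReversal_two_three_two_one (h : IsCoxeterB s n) (hn : 3 ≤ n) :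
    prefixReversal s 2 * prefixReversal s 3 * prefixReversal s 2 * prefixReversal s 1 = s 2 := by
  have h0 := h.involution 0 (by omega)
  calc _ = s 2 * (s 1 * (s 0 * s 0) * s 1) * (s 0 * s 0) := by
        rw [h.prefixReversal_two_mul_three hn, prefixReversal_two, prefixReversal_one]; group
    _ = s 2 := by simp only [h0, mul_one, h.involution 1 (by omega)]

/-- `s 2 * s 1 * s 0` is a Coxeter element of `B_3`; its cube is the central element `-1`. -/
theorem pow_three_eq_signChange (h : IsCoxeterB s n) (hn : 3 ≤ n) :
    (s 2 * s 1 * s 0) ^ 3 = signChange s 2 * signChange s 1 * signChange s 0 := by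
  have h02 := (h.commute (i := 0) (j := 2) le_rfl (by omega)).eq
  calc _ = s 2 * s 1 * (s 0 * s 2) * s 1 * (s 0 * s 2) * s 1 * s 0 := by
        simp only [pow_succ, pow_zero, one_mul, mul_assoc]
    _ = s 2 * s 1 * (s 2 * s 0) * (s 1 * s 2 * s 0 * s 1 * s 0) := by
        rw [h02]; group
    _ = s 2 * s 1 * (s 0 * s 2) * (s 1 * s 2 * s 0 * s 1 * s 0) := by rw [h02]
    _ = s 2 * s 1 * s 0 * (s 2 * s 1 * s 2) * s 0 * s 1 * s 0 := by group
    _ = _ := by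
        rw [← h.braid le_rfl (by omega)]
        simp only [signChange_succ, signChange_zero, mul_assoc]

theorem prefixReversal_rb2 (h : IsCoxeterB s n) (hn : 3 ≤ n) :
    (prefixReversal s 2 * prefixReversal s 3) ^ 6 = 1 := by
  have h01 := h.commute_signChange_signChange (m := 0) (k := 1) (by omega) (by omega)
  have h02 := h.commute_signChange_signChange (m := 0) (k := 2) (by omega) (by omega)
  have h12 := h.commute_signChange_signChange (m := 1) (k := 2) (by omega) (by omega)
  have h21_sq : signChange s 2 * signChange s 1 * (signChange s 2 * signChange s 1) = 1 := by
    rw [← pow_two]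
    exact h12.symm.mul_pow_two_eq_one (h.signChange_mul_self (by omega))
      (h.signChange_mul_self (by omega))
  rw [h.prefixReversal_two_mul_three hn, show 6 = 3 * 2 from rfl, pow_mul,
    h.pow_three_eq_signChange hn]
  exact (h02.symm.mul_left h01.symm).mul_pow_two_eq_one h21_sq (h.signChange_mul_self (by omega))

theorem prefixReversal_rb3 (h : IsCoxeterB s n) {k : ℕ} (hk2 : 2 ≤ k) (hk : k ≤ n) :
    (prefixReversal s 1 * prefixReversal s k) ^ 4 = 1 := by
  have hsq : (prefixReversal s 1 * prefixReversal s k) ^ 2 = s 0 * signChange s (k - 1) := by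
    rw [pow_two, prefixReversal_one, ← h.prefixReversal_conj_zero (by omega) hk]
    group
  rw [show 4 = 2 * 2 from rfl, pow_mul, hsq]
  exact (h.commute_signChange_of_lt (by omega) (by omega)).mul_pow_two_eq_one
    (h.involution 0 (by omega)) (h.signChange_mul_self (by omega))

theorem prefixReversal_rb4 (h : IsCoxeterB s n) {k : ℕ} (hk4 : 4 ≤ k) (hk : k ≤ n) :
    (prefixReversal s 1 * prefixReversal s 2 * prefixReversal s 1 * prefixReversal s k) ^ 4 =
      1 := by
  have hsq : (s 1 * prefixReversal s k) ^ 2 = s 1 * s (k - 1) := by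
    rw [pow_two, ← h.prefixReversal_conj (i := 1) le_rfl (by omega) hk]
    group
  rw [h.prefixReversal_one_two_one, show 4 = 2 * 2 from rfl, pow_mul, hsq]
  exact (h.commute (by omega) (by omega)).mul_pow_two_eq_one (h.involution 1 (by omega))
    (h.involution _ (by omega))

theorem prefixReversal_rb5 (h : IsCoxeterB s n) {k : ℕ} (hk3 : 3 ≤ k) (hk : k ≤ n) :
    (prefixReversal s k * prefixReversal s 1 * prefixReversal s k * prefixReversal s 2) ^ 2 =
      1 := by
  have c0 := (h.commute_signChange_of_lt (j := 0) (m := k - 1) (by omega) (by omega)).symm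
  have c1 := (h.commute_signChange_of_lt (j := 1) (m := k - 1) (by omega) (by omega)).symm
  rw [prefixReversal_one, h.prefixReversal_conj_zero (by omega) hk]
  refine Commute.mul_pow_two_eq_one ?_ (h.signChange_mul_self (by omega))
    (h.prefixReversal_mul_self (by omega))
  rw [prefixReversal_two]
  exact (c0.mul_right c1).mul_right c0

theorem prefixReversal_rb6 (h : IsCoxeterB s n) {k : ℕ} (hk2 : 2 ≤ k) (hk : k + 1 ≤ n) :
    prefixReversal s k * prefixReversal s 1 * prefixReversal s 2 * prefixReversal s 1 *
      prefixReversal s k * prefixReversal s (k + 1) * prefixReversal s 2 * prefixReversal s 3 *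
      prefixReversal s 2 * prefixReversal s 1 * prefixReversal s (k + 1) = 1 := by
  calc _ = prefixReversal s k *
        (prefixReversal s 1 * prefixReversal s 2 * prefixReversal s 1) * prefixReversal s k *
        (prefixReversal s (k + 1) * (prefixReversal s 2 * prefixReversal s 3 *
          prefixReversal s 2 * prefixReversal s 1) * prefixReversal s (k + 1)) := by group
    _ = s (k - 1) * s (k - 1) := by
        rw [h.prefixReversal_one_two_one, h.prefixReversal_two_three_two_one (by omega),
          h.prefixReversal_conj le_rfl (by omega) (by omega),
          h.prefixReversal_conj (by omega) (by omega) hk, show k + 1 - 2 = k - 1 by omega]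
    _ = 1 := h.involution _ (by omega)

theorem prefixReversal_rb7 (h : IsCoxeterB s n) {k : ℕ} (hk2 : 2 ≤ k) (hk : k + 1 ≤ n) :
    prefixReversal s (k + 1) * prefixReversal s 1 * prefixReversal s 2 * prefixReversal s 1 *
      prefixReversal s (k + 1) * prefixReversal s (k - 1) * prefixReversal s k *
      prefixReversal s (k + 1) * prefixReversal s k = 1 := by
  obtain ⟨t, rfl⟩ : ∃ t, k = t + 1 := ⟨k - 1, by omega⟩
  calc _ = prefixReversal s (t + 2) *
        (prefixReversal s 1 * prefixReversal s 2 * prefixReversal s 1) * prefixReversal s (t + 2) *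
        (prefixReversal s t * prefixReversal s (t + 1) * prefixReversal s (t + 2) *
          prefixReversal s (t + 1)) := by rw [Nat.add_sub_cancel]; group
    _ = s (t + 1) * s (t + 1) := by
        rw [h.prefixReversal_one_two_one, ← coxeterGen, h.coxeterGen_prefixReversal (by omega),
          h.prefixReversal_conj le_rfl (by omega) hk, Nat.add_sub_cancel]
    _ = 1 := h.involution _ (by omega)

theorem prefixReversal_rb8 (h : IsCoxeterB s n) {k l : ℕ} (hk2 : 2 ≤ k) (hkl : k + 2 ≤ l)
    (hl : l ≤ n) :
    prefixReversal s k * prefixReversal s 1 * prefixReversal s 2 * prefixReversal s 1 *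
      prefixReversal s k * prefixReversal s l * prefixReversal s (l - k + 2) *
      prefixReversal s 1 * prefixReversal s 2 * prefixReversal s 1 *
      prefixReversal s (l - k + 2) * prefixReversal s l = 1 := by
  calc _ = prefixReversal s k *
        (prefixReversal s 1 * prefixReversal s 2 * prefixReversal s 1) * prefixReversal s k *
        (prefixReversal s l * (prefixReversal s (l - k + 2) *
          (prefixReversal s 1 * prefixReversal s 2 * prefixReversal s 1) *
          prefixReversal s (l - k + 2)) * prefixReversal s l) := by group
    _ = s (k - 1) * s (k - 1) := by
        rw [h.prefixReversal_one_two_one, h.prefixReversal_conj le_rfl (by omega) (by omega),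
          h.prefixReversal_conj le_rfl (by omega) (by omega),
          h.prefixReversal_conj (by omega) (by omega) hl, show l - (l - k + 2 - 1) = k - 1 by omega]
    _ = 1 := h.involution _ (by omega)

theorem isReversalB_prefixReversal (h : IsCoxeterB s n) (hn : 3 ≤ n) :
    IsReversalB (prefixReversal s) n where
  zero := rfl
  rb1 _ hk := h.prefixReversal_mul_self hk
  rb2 := h.prefixReversal_rb2 hn
  rb3 _ hk2 hk := h.prefixReversal_rb3 hk2 hk
  rb4 _ hk4 hk := h.prefixReversal_rb4 hk4 hk
  rb5 _ hk3 hk := h.prefixReversal_rb5 hk3 hk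
  rb6 _ hk2 hk := h.prefixReversal_rb6 hk2 hk
  rb7 _ hk2 hk := h.prefixReversal_rb7 hk2 hk
  rb8 _ _ hk2 hkl hl := h.prefixReversal_rb8 hk2 hkl hl

end IsCoxeterB

namespace IsReversalB

variable {G : Type*} [Group G] {r : ℕ → G} {n : ℕ}

theorem inv_eq (h : IsReversalB r n) {k : ℕ} (hk : k ≤ n) : (r k)⁻¹ = r k :=
  inv_eq_of_mul_eq_one_right (h.rb1 k hk)

theorem r121_mul_self (h : IsReversalB r n) (hn : 2 ≤ n) :
    r 1 * r 2 * r 1 * (r 1 * r 2 * r 1) = 1 :=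
  conj_mul_self (h.rb1 1 (by omega)) (h.rb1 2 hn)

theorem coxeterGen_one (h : IsReversalB r n) : coxeterGen r 1 = r 1 * r 2 * r 1 := by
  rw [coxeterGen, h.zero, one_mul]

theorem coxeterGen_eq_conj (h : IsReversalB r n) {i : ℕ} (hi : 2 ≤ i) (hin : i + 1 ≤ n) :
    coxeterGen r i = r (i + 1) * (r 1 * r 2 * r 1) * r (i + 1) := by
  obtain ⟨t, rfl⟩ : ∃ t, i = t + 1 := ⟨i - 1, by omega⟩
  refine eq_of_mul_eq_one_of_mul_self ?_
    (conj_mul_self (h.rb1 _ hin) (h.r121_mul_self (by omega)))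
  simpa only [coxeterGen, Nat.add_sub_cancel, mul_assoc] using h.rb7 (t + 1) hi hin

theorem coxeterGen_eq_conj_two (h : IsReversalB r n) {i : ℕ} (hi : 2 ≤ i) (hin : i + 2 ≤ n) :
    coxeterGen r i = r (i + 2) * coxeterGen r 2 * r (i + 2) := by
  have h6 : coxeterGen r i * (r (i + 2) * (r 2 * r 3 * r 2 * r 1) * r (i + 2)) = 1 := by
    rw [h.coxeterGen_eq_conj hi (by omega)]
    simpa only [mul_assoc] using h.rb6 (i + 1) (by omega) hin
  rw [eq_inv_of_mul_eq_one_left h6]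
  simp only [mul_inv_rev, h.inv_eq hin, h.inv_eq (k := 1) (by omega), h.inv_eq (k := 2) (by omega),
    h.inv_eq (k := 3) (by omega), coxeterGen, mul_assoc]

theorem coxeterGen_mul_self (h : IsReversalB r n) (hn : 1 ≤ n) {i : ℕ} (hi : i ≤ n - 1) :
    coxeterGen r i * coxeterGen r i = 1 := by
  rcases Nat.lt_or_ge i 2 with hi2 | hi2
  · interval_cases i
    · exact h.rb1 1 hn
    · rw [h.coxeterGen_one]; exact h.r121_mul_self (by omega)
  · rw [h.coxeterGen_eq_conj hi2 (by omega)]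
    exact conj_mul_self (h.rb1 _ (by omega)) (h.r121_mul_self (by omega))

theorem commute_r1_conj (h : IsReversalB r n) {k : ℕ} (hk2 : 2 ≤ k) (hk : k ≤ n) :
    Commute (r 1) (r k * r 1 * r k) :=
  commute_conj_of_mul_pow_four (h.rb1 1 (by omega)) (h.rb1 k hk) (h.rb3 k hk2 hk)

theorem commute_r2_conj (h : IsReversalB r n) {k : ℕ} (hk3 : 3 ≤ k) (hk : k ≤ n) :
    Commute (r 2) (r k * r 1 * r k) :=
  (commute_of_mul_pow_two (conj_mul_self (h.rb1 k hk) (h.rb1 1 (by omega)))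
    (h.rb1 2 (by omega)) (by simpa only [mul_assoc] using h.rb5 k hk3 hk)).symm

theorem commute_r1_conj_r2 (h : IsReversalB r n) {k : ℕ} (hk3 : 3 ≤ k) (hk : k ≤ n) :
    Commute (r 1) (r k * r 2 * r k) :=
  (commute_conj_iff_of_mul_self (h.rb1 k hk)).1 (h.commute_r2_conj hk3 hk).symm

theorem conj_r3_r121 (h : IsReversalB r n) (hn : 3 ≤ n) :
    r 3 * (r 1 * r 2 * r 1) * r 3 = r 2 * r 3 * r 2 * r 1 := by
  have h7 : r 3 * (r 1 * r 2 * r 1) * r 3 * (r 1 * r 2 * r 3 * r 2) = 1 := by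
    simpa only [mul_assoc] using h.rb7 2 le_rfl hn
  rw [eq_inv_of_mul_eq_one_left h7]
  simp only [mul_inv_rev, h.inv_eq (k := 1) (by omega), h.inv_eq (k := 2) (by omega),
    h.inv_eq hn, mul_assoc]

theorem r121_eq_conj_r3 (h : IsReversalB r n) (hn : 3 ≤ n) :
    r 1 * r 2 * r 1 = r 3 * (r 1 * r 2 * r 3 * r 2) * r 3 := by
  have h2 : r 2 * (r 1 * r 2 * r 1) * r 2 = r 1 * r 2 * r 1 := by
    calc r 2 * (r 1 * r 2 * r 1) * r 2 = r 2 * r 1 * r 2 * r 1 * r 2 := by group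
      _ = r 1 * (r 2 * r 1 * r 2) * r 2 := by
          rw [← (h.commute_r1_conj (k := 2) le_rfl (by omega)).eq]
      _ = r 1 * r 2 * r 1 := by simp only [mul_assoc, h.rb1 2 (by omega), mul_one]
  have h6 : r 1 * r 2 * r 1 * (r 3 * (r 2 * r 3 * r 2 * r 1) * r 3) = 1 := by
    rw [← h2]
    simpa only [mul_assoc] using h.rb6 2 le_rfl hn
  rw [eq_inv_of_mul_eq_one_left h6]
  simp only [mul_inv_rev, h.inv_eq (k := 1) (by omega), h.inv_eq (k := 2) (by omega),
    h.inv_eq hn, mul_assoc]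

theorem commute_r1_r232 (h : IsReversalB r n) (hn : 3 ≤ n) :
    Commute (r 1) (r 2 * r 3 * r 2) := by
  have h3 := h.rb1 3 hn
  calc r 1 * (r 2 * r 3 * r 2) = r 3 * (r 3 * (r 1 * r 2 * r 3 * r 2) * r 3) * r 3 := by
        simp only [← mul_assoc, h3, one_mul]
        simp only [mul_assoc, h3, mul_one]
    _ = r 2 * r 3 * r 2 * r 1 := by rw [← h.r121_eq_conj_r3 hn, h.conj_r3_r121 hn]

theorem commute_r3_r212 (h : IsReversalB r n) (hn : 3 ≤ n) :
    Commute (r 3) (r 2 * r 1 * r 2) :=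
  ((commute_conj_iff_of_mul_self (h.rb1 2 (by omega))).2 (h.commute_r1_r232 hn)).symm

theorem r1r3r2_pow_three (h : IsReversalB r n) (hn : 3 ≤ n) : (r 1 * r 3 * r 2) ^ 3 = 1 := by
  have h3 := h.rb1 3 hn
  have c1 := (h.commute_r1_conj (k := 3) (by omega) hn).eq
  have c2 := (h.commute_r2_conj (k := 3) le_rfl hn).eq
  calc (r 1 * r 3 * r 2) ^ 3
      = r 3 * r 3 * (r 1 * r 3 * r 2 * r 1 * r 3 * r 2 * r 1 * r 3 * r 2) := by
        rw [h3, one_mul]; simp only [pow_succ, pow_zero, one_mul, mul_assoc]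
    _ = r 3 * (r 3 * r 1 * r 3 * r 2) * r 1 * r 3 * r 2 * r 1 * r 3 * r 2 := by group
    _ = r 3 * r 2 * (r 3 * r 1 * r 3 * r 1) * r 3 * r 2 * r 1 * r 3 * r 2 := by
        rw [← c2]; group
    _ = r 3 * r 2 * r 1 * r 3 * r 1 * (r 3 * r 3) * r 2 * r 1 * r 3 * r 2 := by
        rw [← c1]; group
    _ = r 3 * r 2 * r 1 * (r 3 * (r 1 * r 2 * r 1) * r 3) * r 2 := by rw [h3, mul_one]; group
    _ = r 3 * (r 2 * r 1 * r 2) * r 3 * (r 2 * r 1 * r 2) := by rw [h.conj_r3_r121 hn]; group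
    _ = r 2 * r 1 * r 2 * (r 3 * r 3) * (r 2 * r 1 * r 2) := by
        rw [(h.commute_r3_r212 hn).eq]; group
    _ = 1 := by rw [h3, mul_one, conj_mul_self (h.rb1 2 (by omega)) (h.rb1 1 (by omega))]

theorem coxeterGen_rel_zero_one (h : IsReversalB r n) (hn : 2 ≤ n) :
    (coxeterGen r 0 * coxeterGen r 1) ^ 4 = 1 := by
  have h1 := h.rb1 1 (by omega)
  have e : coxeterGen r 0 * coxeterGen r 1 = (r 1 * r 2)⁻¹ := by
    rw [coxeterGen, h.coxeterGen_one, ← mul_assoc, ← mul_assoc, h1, one_mul, mul_inv_rev,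
      inv_eq_of_mul_eq_one_right h1, h.inv_eq hn]
  rw [e, inv_pow, h.rb3 2 le_rfl hn, inv_one]

theorem coxeterGen_rel_one_two (h : IsReversalB r n) (hn : 3 ≤ n) :
    (coxeterGen r 1 * coxeterGen r 2) ^ 3 = 1 := by
  have e : coxeterGen r 1 * coxeterGen r 2 = r 1 * r 3 * r 2 := by
    calc coxeterGen r 1 * coxeterGen r 2 = r 1 * r 2 * (r 1 * r 1) * r 2 * r 3 * r 2 := by
          rw [h.coxeterGen_one]; simp only [coxeterGen]; group
      _ = r 1 * r 3 * r 2 := by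
          rw [h.rb1 1 (by omega), mul_one, mul_assoc (r 1), h.rb1 2 (by omega), mul_one]
  rw [e, h.r1r3r2_pow_three hn]

theorem coxeterGen_rel_succ (h : IsReversalB r n) {i : ℕ} (hi : 1 ≤ i)
    (hin : i + 1 ≤ n - 1) : (coxeterGen r i * coxeterGen r (i + 1)) ^ 3 = 1 := by
  have hn : 3 ≤ n := by omega
  rcases Nat.lt_or_ge i 2 with hi2 | hi2
  · obtain rfl : i = 1 := by omega
    exact h.coxeterGen_rel_one_two hn
  have hr := h.rb1 (i + 2) (by omega)
  have e : coxeterGen r i * coxeterGen r (i + 1) =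
      r (i + 2) * (coxeterGen r 1 * coxeterGen r 2)⁻¹ * r (i + 2) := by
    rw [h.coxeterGen_eq_conj_two hi2 (by omega), h.coxeterGen_eq_conj (i := i + 1) (by omega)
      (by omega), ← h.coxeterGen_one, mul_inv_rev,
      inv_eq_of_mul_eq_one_right (h.coxeterGen_mul_self (by omega) (i := 1) (by omega)),
      inv_eq_of_mul_eq_one_right (h.coxeterGen_mul_self (by omega) (i := 2) (by omega))]
    calc r (i + 2) * coxeterGen r 2 * r (i + 2) * (r (i + 2) * coxeterGen r 1 * r (i + 2))
        = r (i + 2) * coxeterGen r 2 * (r (i + 2) * r (i + 2)) * coxeterGen r 1 * r (i + 2) := by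
          group
      _ = _ := by rw [hr, mul_one, mul_assoc (r (i + 2))]
  rw [e, conj_pow_of_mul_self hr, inv_pow, h.coxeterGen_rel_one_two hn, inv_one, mul_one, hr]

theorem commute_r1_coxeterGen (h : IsReversalB r n) {j : ℕ} (hj : 2 ≤ j) (hjn : j + 1 ≤ n) :
    Commute (r 1) (coxeterGen r j) := by
  have c1 := h.commute_r1_conj (k := j + 1) (by omega) hjn
  have c2 := h.commute_r1_conj_r2 (k := j + 1) (by omega) hjn
  have e : coxeterGen r j = r (j + 1) * r 1 * r (j + 1) * (r (j + 1) * r 2 * r (j + 1)) *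
      (r (j + 1) * r 1 * r (j + 1)) := by
    rw [h.coxeterGen_eq_conj hj hjn]
    simp only [mul_assoc, mul_mul_cancel_of_mul_self (h.rb1 _ hjn)]
  rw [e]
  exact (c1.mul_right c2).mul_right c1

theorem coxeterGen_eq_conj_far (h : IsReversalB r n) {i j : ℕ} (hi : 2 ≤ i) (hij : i + 2 ≤ j)
    (hjn : j + 1 ≤ n) : coxeterGen r i =
      r (j + 1) * (r (j - i + 2) * (r 1 * r 2 * r 1) * r (j - i + 2)) * r (j + 1) := by
  have h8 := h.rb8 (i + 1) (j + 1) (by omega) (by omega) hjn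
  rw [show j + 1 - (i + 1) + 2 = j - i + 2 by omega] at h8
  replace h8 : r (i + 1) * (r 1 * r 2 * r 1) * r (i + 1) *
      (r (j + 1) * (r (j - i + 2) * (r 1 * r 2 * r 1) * r (j - i + 2)) * r (j + 1)) = 1 := by
    simpa only [mul_assoc] using h8
  rw [h.coxeterGen_eq_conj hi (by omega), eq_inv_of_mul_eq_one_left h8, inv_eq_of_mul_eq_one_right
    (conj_mul_self (h.rb1 _ hjn) (conj_mul_self (h.rb1 _ (by omega)) (h.r121_mul_self (by omega))))]

theorem coxeterGen_rel_far (h : IsReversalB r n) {i j : ℕ} (hij : i + 2 ≤ j)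
    (hj : j ≤ n - 1) : (coxeterGen r i * coxeterGen r j) ^ 2 = 1 := by
  have hr := h.rb1 (j + 1) (by omega)
  rcases Nat.lt_trichotomy i 1 with hi | rfl | hi
  · obtain rfl : i = 0 := by omega
    exact (h.commute_r1_coxeterGen (by omega) (by omega)).mul_pow_two_eq_one
      (h.rb1 1 (by omega)) (h.coxeterGen_mul_self (by omega) hj)
  · calc (coxeterGen r 1 * coxeterGen r j) ^ 2 = (r 1 * r 2 * r 1 * r (j + 1)) ^ 4 := by
          rw [h.coxeterGen_one, h.coxeterGen_eq_conj (by omega) (by omega)]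
          simp only [pow_succ, pow_zero, one_mul, mul_assoc]
      _ = 1 := h.rb4 (j + 1) (by omega) (by omega)
  · have hm := h.rb1 (j - i + 2) (by omega)
    have e : coxeterGen r i * coxeterGen r j = r (j + 1) *
        (r (j - i + 2) * (r 1 * r 2 * r 1 * r (j - i + 2)) * r (j - i + 2)) ^ 2 * r (j + 1) := by
      rw [h.coxeterGen_eq_conj_far (by omega) hij (by omega),
        h.coxeterGen_eq_conj (by omega) (by omega)]
      simp only [pow_two, mul_assoc, mul_mul_cancel_of_mul_self hr, mul_mul_cancel_of_mul_self hm]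
    rw [e, conj_pow_of_mul_self hr, ← pow_mul, conj_pow_of_mul_self hm, show 2 * 2 = 4 from rfl,
      h.rb4 _ (by omega) (by omega), mul_one, hm, mul_one, hr]

theorem isCoxeterB_coxeterGen (h : IsReversalB r n) (hn : 2 ≤ n) :
    IsCoxeterB (coxeterGen r) n where
  involution _ hi := h.coxeterGen_mul_self (by omega) hi
  rel_zero_one := h.coxeterGen_rel_zero_one hn
  rel_succ _ hi hin := h.coxeterGen_rel_succ hi hin
  rel_far _ _ hij hj := h.coxeterGen_rel_far hij hj

theorem prefixProd_coxeterGen (h : IsReversalB r n) {k : ℕ} (hk : k + 1 ≤ n) :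
    prefixProd (coxeterGen r) k = r (k + 1) * r k := by
  induction k with
  | zero => rw [prefixProd_zero, coxeterGen, h.zero, mul_one]
  | succ k ih =>
    rw [prefixProd_succ, ih (by omega), coxeterGen]
    simp only [mul_assoc, mul_mul_cancel_of_mul_self (h.rb1 k (by omega))]
    rw [← mul_assoc, h.rb1 (k + 1) (by omega), one_mul]

theorem prefixReversal_coxeterGen (h : IsReversalB r n) {k : ℕ} (hk : k ≤ n) :
    prefixReversal (coxeterGen r) k = r k := by
  induction k with
  | zero => exact h.zero.symm
  | succ k ih =>
    rw [prefixReversal_succ, ih (by omega), h.prefixProd_coxeterGen hk, mul_assoc,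
      h.rb1 k (by omega), mul_one]

end IsReversalB

section Presentations

variable {G : Type*} [Group G] (n : ℕ)

/-- Equal to `1` for `k = 0` and for `k > n`. -/
def reversalGen (k : ℕ) : PresentedGroup (relsB n) := PresentedGroup.mk _ (rB n k)

def simpleGen (i : ℕ) : PresentedGroup (coxRelsB n) := PresentedGroup.mk _ (sB n i)

variable {n}

theorem reversalGen_eq_of {k : ℕ} (hk1 : 1 ≤ k) (hk : k ≤ n) :
    reversalGen n k = PresentedGroup.of ⟨k, hk1, hk⟩ := by
  rw [reversalGen, rB, dif_pos ⟨hk1, hk⟩]; rfl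

theorem simpleGen_eq_of {i : ℕ} (hi : i ≤ n - 1) :
    simpleGen n i = PresentedGroup.of ⟨i, hi⟩ := by
  rw [simpleGen, sB, dif_pos hi]; rfl

theorem lift_rB {r : ℕ → G} {k : ℕ} (hk1 : 1 ≤ k) (hk : k ≤ n) :
    FreeGroup.lift (fun x : GenB n => r x.1) (rB n k) = r k := by
  rw [rB, dif_pos ⟨hk1, hk⟩]
  exact FreeGroup.lift_apply_of

theorem lift_sB {s : ℕ → G} {i : ℕ} (hi : i ≤ n - 1) :
    FreeGroup.lift (fun x : CoxGenB n => s x.1) (sB n i) = s i := by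
  rw [sB, dif_pos hi]
  exact FreeGroup.lift_apply_of

theorem toGroup_reversalGen {r : ℕ → G}
    (h : ∀ w ∈ relsB n, FreeGroup.lift (fun x : GenB n => r x.1) w = 1) (h0 : r 0 = 1)
    {k : ℕ} (hk : k ≤ n) : PresentedGroup.toGroup h (reversalGen n k) = r k := by
  rcases Nat.eq_zero_or_pos k with rfl | hk1
  · rw [reversalGen, rB, dif_neg (by omega), map_one, map_one, h0]
  · rw [reversalGen_eq_of hk1 hk]
    exact PresentedGroup.toGroup.of h

theorem toGroup_simpleGen {s : ℕ → G}
    (h : ∀ w ∈ coxRelsB n, FreeGroup.lift (fun x : CoxGenB n => s x.1) w = 1)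
    {i : ℕ} (hi : i ≤ n - 1) : PresentedGroup.toGroup h (simpleGen n i) = s i := by
  rw [simpleGen_eq_of hi]
  exact PresentedGroup.toGroup.of h

theorem IsReversalB.lift_eq_one {r : ℕ → G} (h : IsReversalB r n) (hn : 3 ≤ n) :
    ∀ w ∈ relsB n, FreeGroup.lift (fun x : GenB n => r x.1) w = 1 := by
  rintro w (⟨k, hk1, hk, rfl⟩ | rfl | ⟨k, hk2, hk, rfl⟩ | ⟨k, hk4, hk, rfl⟩ |
    ⟨k, hk3, hk, rfl⟩ | ⟨k, hk2, hk, rfl⟩ | ⟨k, hk2, hk, rfl⟩ |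
    ⟨k, l, hk2, -, hkl, hl, rfl⟩) <;>
    simp (disch := omega) only [map_pow, map_mul, lift_rB]
  · rw [sq]; exact h.rb1 k hk
  · exact h.rb2
  · exact h.rb3 k hk2 hk
  · exact h.rb4 k hk4 hk
  · exact h.rb5 k hk3 hk
  · exact h.rb6 k hk2 (by omega)
  · exact h.rb7 k hk2 (by omega)
  · exact h.rb8 k l hk2 hkl hl

theorem IsCoxeterB.lift_eq_one {s : ℕ → G} (h : IsCoxeterB s n) (hn : 2 ≤ n) :
    ∀ w ∈ coxRelsB n, FreeGroup.lift (fun x : CoxGenB n => s x.1) w = 1 := by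
  rintro w (⟨i, hi, rfl⟩ | rfl | ⟨i, hi1, hi, rfl⟩ | ⟨i, j, -, hij, hj, rfl⟩) <;>
    simp (disch := omega) only [map_pow, map_mul, lift_sB]
  · rw [sq]; exact h.involution i hi
  · exact h.rel_zero_one
  · exact h.rel_succ i hi1 (by omega)
  · exact h.rel_far i j hij hj

theorem isReversalB_reversalGen : IsReversalB (reversalGen n) n := by
  have rel : ∀ w ∈ relsB n, PresentedGroup.mk (relsB n) w = 1 :=
    fun _ => PresentedGroup.one_of_mem
  refine ⟨?_, fun k hk => ?_, ?_, fun k hk2 hk => ?_, fun k hk4 hk => ?_, fun k hk3 hk => ?_,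
    fun k hk2 hk => ?_, fun k hk2 hk => ?_, fun k l hk2 hkl hl => ?_⟩
  · rw [reversalGen, rB, dif_neg (by omega), map_one]
  · rcases Nat.eq_zero_or_pos k with rfl | hk1
    · rw [reversalGen, rB, dif_neg (by omega), map_one, one_mul]
    · simpa only [reversalGen, sq, map_mul] using rel _ (Or.inl ⟨k, hk1, hk, rfl⟩)
  · simpa only [reversalGen, map_pow, map_mul] using rel _ (Or.inr (Or.inl rfl))
  · simpa only [reversalGen, map_pow, map_mul] using
      rel _ (Or.inr (Or.inr (Or.inl ⟨k, hk2, hk, rfl⟩)))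
  · simpa only [reversalGen, map_pow, map_mul] using
      rel _ (Or.inr (Or.inr (Or.inr (Or.inl ⟨k, hk4, hk, rfl⟩))))
  · simpa only [reversalGen, map_pow, map_mul] using
      rel _ (Or.inr (Or.inr (Or.inr (Or.inr (Or.inl ⟨k, hk3, hk, rfl⟩)))))
  · simpa only [reversalGen, map_mul] using
      rel _ (Or.inr (Or.inr (Or.inr (Or.inr (Or.inr (Or.inl ⟨k, hk2, by omega, rfl⟩))))))
  · simpa only [reversalGen, map_mul] using
      rel _ (Or.inr (Or.inr (Or.inr (Or.inr (Or.inr (Or.inr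
        (Or.inl ⟨k, hk2, by omega, rfl⟩)))))))
  · simpa only [reversalGen, map_mul] using
      rel _ (Or.inr (Or.inr (Or.inr (Or.inr (Or.inr (Or.inr (Or.inr
        ⟨k, l, hk2, by omega, hkl, hl, rfl⟩)))))))

theorem isCoxeterB_simpleGen : IsCoxeterB (simpleGen n) n := by
  have rel : ∀ w ∈ coxRelsB n, PresentedGroup.mk (coxRelsB n) w = 1 :=
    fun _ => PresentedGroup.one_of_mem
  refine ⟨fun i hi => ?_, ?_, fun i hi hin => ?_, fun i j hij hj => ?_⟩
  · simpa only [simpleGen, sq, map_mul] using rel _ (Or.inl ⟨i, hi, rfl⟩)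
  · simpa only [simpleGen, map_pow, map_mul] using rel _ (Or.inr (Or.inl rfl))
  · simpa only [simpleGen, map_pow, map_mul] using
      rel _ (Or.inr (Or.inr (Or.inl ⟨i, hi, by omega, rfl⟩)))
  · simpa only [simpleGen, map_pow, map_mul] using
      rel _ (Or.inr (Or.inr (Or.inr ⟨i, j, by omega, hij, hj, rfl⟩)))

end Presentations

end CoxeterB

open CoxeterB

theorem stmt1 (n : ℕ) (hn : 3 < n) :
    Nonempty (PresentedGroup (relsB n) ≃* PresentedGroup (coxRelsB n)) := by
  have hσ : IsCoxeterB (simpleGen n) n := isCoxeterB_simpleGen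
  have hρ : IsReversalB (reversalGen n) n := isReversalB_reversalGen
  have hA := (hσ.isReversalB_prefixReversal hn.le).lift_eq_one hn.le
  have hB := (hρ.isCoxeterB_coxeterGen (by omega)).lift_eq_one (by omega)
  refine PresentedGroup.nonempty_mulEquiv hA hB ?_ ?_
  · rintro ⟨k, hk1, hk⟩
    dsimp only
    rw [map_prefixReversal _ fun i hi => toGroup_simpleGen hB (by omega),
      hρ.prefixReversal_coxeterGen hk, reversalGen_eq_of hk1 hk]
  · rintro ⟨i, hi⟩
    dsimp only
    rw [map_coxeterGen _ fun j hj => toGroup_reversalGen hA rfl (by omega),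
      hσ.coxeterGen_prefixReversal hi, simpleGen_eq_of hi]
end

section
/- Let n > 3. The group presented by generators r̄_2, r_2, r_3, …, r_n subject to the relators (Rd1)–(Rd10) is isomorphic to the Coxeter group of type D_n, i.e. the group with generators s_0', s_1, …, s_{n-1} and relators s_i^2 for i ∈ [1,n-1], (s_0')^2, (s_0' s_2)^3, (s_i s_{i+1})^3 for i ∈ [1,n-2], (s_0' s_i)^2 for i ∈ {1} ∪ [3,n-1], and (s_i s_j)^2 for i ∈ [1,n-1] and j ∈ [i+2,n-1]. -/
/-- Generator indices for the prefix-reversal presentation of `D_n`: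
`none` stands for `r̄_2` and `some k` for `r_k`, `k ∈ [2,n]`. -/
def GenD (n : ℕ) : Type := Option {k : ℕ // 2 ≤ k ∧ k ≤ n}

/-- The generator `r̄_2` as an element of the free group. -/
def rbD (n : ℕ) : FreeGroup (GenD n) := FreeGroup.of none

/-- The generator `r_k` as an element of the free group (equal to `1` out of range;
all occurrences in the relators below are in range). -/
def rD (n : ℕ) (k : ℕ) : FreeGroup (GenD n) :=
  if h : 2 ≤ k ∧ k ≤ n then FreeGroup.of (some ⟨k, h⟩) else 1

/-- The relators (Rd1)–(Rd10). -/
def relsD (n : ℕ) : Set (FreeGroup (GenD n)) :=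
  {w | (w = (rbD n) ^ 2) ∨
       (∃ k, 2 ≤ k ∧ k ≤ n ∧ w = (rD n k) ^ 2) ∨
       (w = (rbD n * rD n 2) ^ 2) ∨
       (w = (rD n 2 * rD n 3) ^ 3) ∨
       (∃ k, 4 ≤ k ∧ k ≤ n ∧ w = (rD n 2 * rD n k) ^ 4) ∨
       (w = (rbD n * rD n 3 * rD n 2 * rD n 3) ^ 3) ∨
       (∃ k, 4 ≤ k ∧ k ≤ n ∧ w = (rbD n * rD n k * rD n 2 * rD n k) ^ 2) ∨
       (∃ k, 3 ≤ k ∧ k ≤ n - 1 ∧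
         w = rD n k * rD n (k - 1) * rD n (k + 1) * rD n 2 *
             rD n (k + 1) * rD n k * rD n (k + 1)) ∨
       (∃ k, 3 ≤ k ∧ k ≤ n - 1 ∧
         w = (rD n k * rD n (k - 1)) ^ 2 * rD n (k + 1) * rD n 3 *
             rD n (k + 1) * rD n (k - 1) * rD n (k + 1)) ∨
       (∃ l k, 4 ≤ l ∧ l ≤ n ∧ 3 ≤ k ∧ k ≤ l - 2 ∧
         w = rD n l * rD n (l - k + 2) * rD n 2 * rD n (l - k + 2) *
             rD n l * rD n k * rD n 2 * rD n k)}

/-- Generator indices for the Coxeter presentation of `D_n`: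
`none` stands for `s_0'` and `some i` for `s_i`, `i ∈ [1,n-1]`. -/
def CoxGenD (n : ℕ) : Type := Option {i : ℕ // 1 ≤ i ∧ i ≤ n - 1}

/-- The generator `s_0'` as an element of the free group. -/
def s0D (n : ℕ) : FreeGroup (CoxGenD n) := FreeGroup.of none

/-- The generator `s_i` as an element of the free group. -/
def sD (n : ℕ) (i : ℕ) : FreeGroup (CoxGenD n) :=
  if h : 1 ≤ i ∧ i ≤ n - 1 then FreeGroup.of (some ⟨i, h⟩) else 1

/-- The type `D_n` Coxeter relators. -/
def coxRelsD (n : ℕ) : Set (FreeGroup (CoxGenD n)) :=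
  {w | (∃ i, 1 ≤ i ∧ i ≤ n - 1 ∧ w = (sD n i) ^ 2) ∨
       (w = (s0D n) ^ 2) ∨
       (w = (s0D n * sD n 2) ^ 3) ∨
       (∃ i, 1 ≤ i ∧ i ≤ n - 2 ∧ w = (sD n i * sD n (i + 1)) ^ 3) ∨
       (∃ i, (i = 1 ∨ (3 ≤ i ∧ i ≤ n - 1)) ∧ w = (s0D n * sD n i) ^ 2) ∨
       (∃ i j, 1 ≤ i ∧ i ≤ n - 1 ∧ i + 2 ≤ j ∧ j ≤ n - 1 ∧ w = (sD n i * sD n j) ^ 2)}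

/-!
In the Coxeter group of type `D_n`, the element `r_k` is realised by the longest element
`S_k = C_{k-1} ⋯ C_2 C_1` of the parabolic subgroup `⟨s_1, …, s_{k-1}⟩ ≅ Sym(k)`, where
`C_t = s_1 ⋯ s_t`; conversely `s_i` is realised by `u_i = r_{i+1} r_2 r_{i+1}`. The type `A`
relations among `s_1, …, s_{n-1}` make `S_l` conjugate `s_j` to `s_{l-j}`, and every relator
(Rd1)–(Rd10) follows from this. In the other direction, (Rd10) says that `r_l` conjugates `u_j` to
`u_{l-j}`, except for `l = 4`, `j = 2`, where (Rd4), (Rd8) and (Rd9) are needed; this yields the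
Coxeter relations for the `u_i`. Finally (Rd8) shows inductively that the word `S_k` in the `u_i`
equals `r_k`, so the two homomorphisms are mutually inverse.
-/

section Involution

variable {G : Type*} [Group G] {a b : G}

lemma mul_pow_three_eq_one_iff (ha : a * a = 1) (hb : b * b = 1) :
    (a * b) ^ 3 = 1 ↔ a * b * a = b * a * b := by
  rw [show (a * b) ^ 3 = a * b * a * (b * a * b) by simp only [pow_succ, pow_zero, one_mul,
    mul_assoc], mul_eq_one_iff_eq_inv, mul_inv_rev, mul_inv_rev, inv_eq_of_mul_eq_one_right ha,
    inv_eq_of_mul_eq_one_right hb]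
  simp only [mul_assoc]

lemma mul_pow_two_eq_one_iff_commute (ha : a * a = 1) (hb : b * b = 1) :
    (a * b) ^ 2 = 1 ↔ Commute a b := by
  rw [pow_two, mul_eq_one_iff_eq_inv, mul_inv_rev, inv_eq_of_mul_eq_one_right ha,
    inv_eq_of_mul_eq_one_right hb]
  rfl

variable {c : G}

lemma conj_eq_of_rd4_rd8_rd9 (ha : a * a = 1) (hb : b * b = 1) (hc : c * c = 1)
    (h4 : (a * b) ^ 3 = 1) (h8 : b * a * c * a * c * b * c = 1)
    (h9 : (b * a) ^ 2 * c * b * c * a * c = 1) :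
    c * (b * a * b) * c = b * a * b := by
  have ha' : ∀ x, a * (a * x) = x := fun x => by rw [← mul_assoc, ha, one_mul]
  have hb' : ∀ x, b * (b * x) = x := fun x => by rw [← mul_assoc, hb, one_mul]
  have hc' : ∀ x, c * (c * x) = x := fun x => by rw [← mul_assoc, hc, one_mul]
  have hinv : a⁻¹ = a ∧ b⁻¹ = b ∧ c⁻¹ = c :=
    ⟨inv_eq_of_mul_eq_one_right ha, inv_eq_of_mul_eq_one_right hb, inv_eq_of_mul_eq_one_right hc⟩
  have hba : (b * a) ^ 2 = a * b := by
    rw [sq, ← mul_assoc, ← (mul_pow_three_eq_one_iff ha hb).1 h4]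
    simp only [mul_assoc, ha, mul_one]
  have hcac : c * a * c = a * b * c * b := by
    rw [show b * a * c * a * c * b * c = b * a * (c * a * c) * (b * c) by group] at h8
    rw [eq_inv_mul_of_mul_eq (eq_inv_of_mul_eq_one_left h8)]
    simp only [mul_inv_rev, hinv, mul_assoc]
  have hcbc : c * b * c = b * a * c * a := by
    rw [hba, show a * b * c * b * c * a * c = a * b * (c * b * c) * (a * c) by group] at h9
    rw [eq_inv_mul_of_mul_eq (eq_inv_of_mul_eq_one_left h9)]
    simp only [mul_inv_rev, hinv, mul_assoc]
  calc c * (b * a * b) * c = (c * b * c) * (c * a * c) * (c * b * c) := by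
        simp only [mul_assoc, hc']
    _ = b * a * c * a * (a * b * c * b) * (b * a * c * a) := by rw [hcbc, hcac]
    _ = b * a * (c * b * c) * a * c * a := by simp only [mul_assoc, ha', hb']
    _ = b * a * b := by rw [hcbc]; simp only [mul_assoc, hc', ha, mul_one]

end Involution

section TypeA

variable {G : Type*} [Group G] (s : ℕ → G)

def prefixCycle : ℕ → G
  | 0 => 1
  | t + 1 => prefixCycle t * s (t + 1)

-- For `s i` the transposition `(i i+1)`, `prefixReversal s k` is the permutation reversing `1, …, k`.
def prefixReversal : ℕ → G
  | 0 => 1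
  | k + 1 => prefixCycle s k * prefixReversal k

@[simp]
lemma prefixCycle_zero : prefixCycle s 0 = 1 := rfl

lemma prefixCycle_succ (t : ℕ) : prefixCycle s (t + 1) = prefixCycle s t * s (t + 1) := rfl

@[simp]
lemma prefixReversal_zero : prefixReversal s 0 = 1 := rfl

lemma prefixReversal_succ (k : ℕ) :
    prefixReversal s (k + 1) = prefixCycle s k * prefixReversal s k := rfl

lemma prefixReversal_two : prefixReversal s 2 = s 1 := by
  simp [prefixReversal_succ, prefixCycle_succ]

lemma prefixReversal_three : prefixReversal s 3 = s 1 * s 2 * s 1 := by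
  simp [prefixReversal_succ, prefixCycle_succ, mul_assoc]

lemma prefixReversal_add_two (k : ℕ) :
    prefixReversal s (k + 2) =
      prefixReversal s (k + 1) * (prefixReversal s k)⁻¹ * s (k + 1) * prefixReversal s (k + 1) := by
  rw [prefixReversal_succ, prefixCycle_succ, prefixReversal_succ s k]
  group

lemma map_prefixCycle {H : Type*} [Group H] (f : G →* H) {t : ℕ → H} {m : ℕ}
    (hst : ∀ i, 1 ≤ i → i ≤ m → f (s i) = t i) :
    f (prefixCycle s m) = prefixCycle t m := by
  induction m with
  | zero => simp
  | succ m ih =>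
    rw [prefixCycle_succ, prefixCycle_succ, map_mul, ih fun i hi him => hst i hi (by omega),
      hst _ (by omega) le_rfl]

lemma map_prefixReversal {H : Type*} [Group H] (f : G →* H) {t : ℕ → H} {k : ℕ}
    (hst : ∀ i, 1 ≤ i → i < k → f (s i) = t i) :
    f (prefixReversal s k) = prefixReversal t k := by
  induction k with
  | zero => simp
  | succ k ih =>
    rw [prefixReversal_succ, prefixReversal_succ, map_mul,
      map_prefixCycle s f fun i hi hik => hst i hi (by omega),
      ih fun i hi hik => hst i hi (by omega)]

structure TypeARelations_s2 (N : ℕ) : Prop where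
  mul_self : ∀ i, 1 ≤ i → i ≤ N → s i * s i = 1
  commute : ∀ i j, 1 ≤ i → i + 2 ≤ j → j ≤ N → Commute (s i) (s j)
  braid : ∀ i, 1 ≤ i → i + 1 ≤ N → s i * s (i + 1) * s i = s (i + 1) * s i * s (i + 1)

namespace TypeARelations_s2

variable {s} {N : ℕ} (h : TypeARelations_s2 s N)
include h

lemma inv_eq {i : ℕ} (hi : 1 ≤ i) (hiN : i ≤ N) : (s i)⁻¹ = s i :=
  inv_eq_of_mul_eq_one_right (h.mul_self i hi hiN)

lemma commute_prefixCycle {j t : ℕ} (hj : t + 2 ≤ j) (hjN : j ≤ N) :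
    Commute (s j) (prefixCycle s t) := by
  induction t with
  | zero => exact Commute.one_right _
  | succ t ih => exact (ih (by omega)).mul_right (h.commute _ _ (by omega) hj hjN).symm

lemma commute_prefixReversal {j k : ℕ} (hj : k + 1 ≤ j) (hjN : j ≤ N) :
    Commute (s j) (prefixReversal s k) := by
  induction k with
  | zero => exact Commute.one_right _
  | succ k ih => exact (h.commute_prefixCycle (by omega) hjN).mul_right (ih (by omega))

lemma prefixReversal_mul_prefixCycle {k : ℕ} (hk : k ≤ N) :
    prefixReversal s k * prefixCycle s k = (prefixCycle s k)⁻¹ * prefixReversal s k := by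
  induction k with
  | zero => simp
  | succ k ih =>
    calc prefixReversal s (k + 1) * prefixCycle s (k + 1)
        = prefixCycle s k * (prefixReversal s k * prefixCycle s k) * s (k + 1) := by
          rw [prefixReversal_succ, prefixCycle_succ]; group
      _ = prefixReversal s k * s (k + 1) := by rw [ih (by omega)]; group
      _ = s (k + 1) * prefixReversal s k := (h.commute_prefixReversal le_rfl hk).symm.eq
      _ = (prefixCycle s (k + 1))⁻¹ * prefixReversal s (k + 1) := by
          rw [prefixCycle_succ, prefixReversal_succ, mul_inv_rev, h.inv_eq (by omega) hk]; group

lemma prefixReversal_mul_self {k : ℕ} (hk : k ≤ N + 1) :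
    prefixReversal s k * prefixReversal s k = 1 := by
  induction k with
  | zero => simp
  | succ k ih =>
    calc prefixReversal s (k + 1) * prefixReversal s (k + 1)
        = prefixCycle s k * (prefixReversal s k * prefixCycle s k) * prefixReversal s k := by
          rw [prefixReversal_succ]; group
      _ = prefixReversal s k * prefixReversal s k := by
          rw [h.prefixReversal_mul_prefixCycle (by omega)]; group
      _ = 1 := ih (by omega)

lemma prefixReversal_succ_eq_mul_inv {k : ℕ} (hk : k ≤ N) :
    prefixReversal s (k + 1) = prefixReversal s k * (prefixCycle s k)⁻¹ := by
  rw [prefixReversal_succ, eq_mul_inv_iff_mul_eq, mul_assoc,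
    h.prefixReversal_mul_prefixCycle hk, mul_inv_cancel_left]

lemma prefixReversal_succ_mul {k : ℕ} (hk : k ≤ N + 1) :
    prefixReversal s (k + 1) * prefixReversal s k = prefixCycle s k := by
  rw [prefixReversal_succ, mul_assoc, h.prefixReversal_mul_self hk, mul_one]

lemma prefixReversal_mul_succ {k : ℕ} (hk : k ≤ N) :
    prefixReversal s k * prefixReversal s (k + 1) = (prefixCycle s k)⁻¹ := by
  rw [h.prefixReversal_succ_eq_mul_inv hk, ← mul_assoc, h.prefixReversal_mul_self (by omega),
    one_mul]

lemma prefixReversal_mul_add_two {k : ℕ} (hk : k + 1 ≤ N) :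
    prefixReversal s k * prefixReversal s (k + 2) =
      (prefixCycle s k)⁻¹ * (prefixCycle s (k + 1))⁻¹ := by
  rw [h.prefixReversal_succ_eq_mul_inv hk, ← mul_assoc, h.prefixReversal_mul_succ (by omega)]

lemma prefixCycle_mul {l m : ℕ} (hm : 1 ≤ m) (hml : m < l) (hl : l ≤ N) :
    prefixCycle s l * s m = s (m + 1) * prefixCycle s l := by
  induction l with
  | zero => omega
  | succ l ih =>
    rw [prefixCycle_succ]
    rcases Nat.lt_or_ge m l with hml' | hml'
    · rw [mul_assoc, ← (h.commute m (l + 1) hm (by omega) hl).eq, ← mul_assoc,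
        ih hml' (by omega), mul_assoc]
    · obtain rfl : m = l := by omega
      obtain ⟨t, rfl⟩ : ∃ t, m = t + 1 := ⟨m - 1, by omega⟩
      calc prefixCycle s (t + 1) * s (t + 2) * s (t + 1)
          = prefixCycle s t * (s (t + 1) * s (t + 2) * s (t + 1)) := by
            rw [prefixCycle_succ]; group
        _ = s (t + 1 + 1) * prefixCycle s t * (s (t + 1) * s (t + 1 + 1)) := by
            rw [h.braid (t + 1) hm (by omega),
              (h.commute_prefixCycle (j := t + 1 + 1) (by omega) (by omega)).eq]
            group
        _ = s (t + 1 + 1) * (prefixCycle s (t + 1) * s (t + 1 + 1)) := by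
            rw [prefixCycle_succ]; group

lemma prefixReversal_conj {l j : ℕ} (hj : 1 ≤ j) (hjl : j < l) (hl : l ≤ N + 1) :
    prefixReversal s l * s j * prefixReversal s l = s (l - j) := by
  induction l, (show 2 ≤ l by omega) using Nat.le_induction generalizing j with
  | base =>
    obtain rfl : j = 1 := by omega
    rw [prefixReversal_two, h.mul_self 1 le_rfl (by omega), one_mul]
  | succ l hl2 ih =>
    have step : ∀ j, 1 ≤ j → j < l →
        prefixReversal s (l + 1) * s j * prefixReversal s (l + 1) = s (l + 1 - j) := by
      intro j hj hjl
      calc prefixReversal s (l + 1) * s j * prefixReversal s (l + 1)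
          = prefixCycle s l * (prefixReversal s l * s j * prefixReversal s l) *
              (prefixCycle s l)⁻¹ := by
            nth_rw 2 [h.prefixReversal_succ_eq_mul_inv (by omega)]
            rw [prefixReversal_succ]; group
        _ = s (l + 1 - j) := by
            rw [ih hj hjl (by omega), h.prefixCycle_mul (by omega) (by omega) (by omega),
              mul_inv_cancel_right]
            congr 1; omega
    rcases Nat.lt_or_ge j l with hjl' | hjl'
    · exact step j hj hjl'
    · obtain rfl : j = l := by omega
      have h1 := step 1 le_rfl (by omega)
      rw [Nat.add_sub_cancel] at h1
      rw [← h1, Nat.add_sub_cancel_left]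
      calc prefixReversal s (j + 1) * (prefixReversal s (j + 1) * s 1 * prefixReversal s (j + 1)) *
            prefixReversal s (j + 1)
          = (prefixReversal s (j + 1) * prefixReversal s (j + 1)) * s 1 *
              (prefixReversal s (j + 1) * prefixReversal s (j + 1)) := by group
        _ = s 1 := by rw [h.prefixReversal_mul_self hl]; group

lemma prefixReversal_conj_two {l : ℕ} (hl2 : 2 ≤ l) (hl : l ≤ N + 1) :
    prefixReversal s l * prefixReversal s 2 * prefixReversal s l = s (l - 1) := by
  rw [prefixReversal_two, h.prefixReversal_conj le_rfl (by omega) hl]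

lemma prefixReversal_rd4 (hN : 2 ≤ N) : (prefixReversal s 2 * prefixReversal s 3) ^ 3 = 1 := by
  rw [prefixReversal_two, prefixReversal_three, ← mul_assoc, ← mul_assoc,
    h.mul_self 1 le_rfl (by omega), one_mul, mul_pow_three_eq_one_iff (h.mul_self 2 (by omega) hN)
      (h.mul_self 1 le_rfl (by omega))]
  exact (h.braid 1 le_rfl hN).symm

lemma prefixReversal_rd5 {k : ℕ} (hk : 4 ≤ k) (hkN : k ≤ N + 1) :
    (prefixReversal s 2 * prefixReversal s k) ^ 4 = 1 := by
  calc (prefixReversal s 2 * prefixReversal s k) ^ 4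
      = (s 1 * (prefixReversal s k * prefixReversal s 2 * prefixReversal s k)) ^ 2 := by
        rw [prefixReversal_two]; simp only [pow_succ, pow_zero, one_mul, mul_assoc]
    _ = 1 := by
        rw [h.prefixReversal_conj_two (by omega) hkN, mul_pow_two_eq_one_iff_commute
          (h.mul_self 1 le_rfl (by omega)) (h.mul_self _ (by omega) (by omega))]
        exact h.commute 1 (k - 1) le_rfl (by omega) (by omega)

lemma prefixReversal_rd8 {k : ℕ} (hk : 1 ≤ k) (hkN : k ≤ N) :
    prefixReversal s k * prefixReversal s (k - 1) * prefixReversal s (k + 1) * prefixReversal s 2 *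
      prefixReversal s (k + 1) * prefixReversal s k * prefixReversal s (k + 1) = 1 := by
  obtain ⟨m, rfl⟩ : ∃ m, k = m + 1 := ⟨k - 1, by omega⟩
  calc _ = (prefixReversal s (m + 1) * prefixReversal s m) *
          (prefixReversal s (m + 2) * prefixReversal s 2 * prefixReversal s (m + 2)) *
          (prefixReversal s (m + 1) * prefixReversal s (m + 2)) := by
        simp only [Nat.add_sub_cancel, mul_assoc]
    _ = prefixCycle s m * s (m + 1) * (prefixCycle s (m + 1))⁻¹ := by
        rw [h.prefixReversal_succ_mul (by omega), h.prefixReversal_conj_two (by omega) (by omega),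
          h.prefixReversal_mul_succ hkN]
        rfl
    _ = 1 := by rw [prefixCycle_succ, mul_inv_cancel]

lemma prefixReversal_inv {k : ℕ} (hk : k ≤ N + 1) : (prefixReversal s k)⁻¹ = prefixReversal s k :=
  inv_eq_of_mul_eq_one_right (h.prefixReversal_mul_self hk)

lemma prefixReversal_conj_three {l : ℕ} (hl : 1 ≤ l) (hlN : l + 1 ≤ N) :
    prefixReversal s (l + 2) * prefixReversal s 3 * prefixReversal s (l + 2) =
      s (l + 1) * s l * s (l + 1) := by
  have hS := h.prefixReversal_inv (k := l + 2) (by omega)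
  have hconj : ∀ j, 1 ≤ j → j < l + 2 →
      prefixReversal s (l + 2) * s j * (prefixReversal s (l + 2))⁻¹ = s (l + 2 - j) :=
    fun j hj hjl => by rw [hS]; exact h.prefixReversal_conj hj hjl (by omega)
  calc _ = prefixReversal s (l + 2) * (s 1 * s 2 * s 1) * (prefixReversal s (l + 2))⁻¹ := by
        rw [prefixReversal_three, hS]
    _ = (prefixReversal s (l + 2) * s 1 * (prefixReversal s (l + 2))⁻¹) *
          (prefixReversal s (l + 2) * s 2 * (prefixReversal s (l + 2))⁻¹) *
          (prefixReversal s (l + 2) * s 1 * (prefixReversal s (l + 2))⁻¹) := by group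
    _ = s (l + 1) * s l * s (l + 1) := by
        rw [hconj 1 le_rfl (by omega), hconj 2 (by omega) (by omega)]; rfl

lemma prefixReversal_rd9 {k : ℕ} (hk : 2 ≤ k) (hkN : k ≤ N) :
    (prefixReversal s k * prefixReversal s (k - 1)) ^ 2 * prefixReversal s (k + 1) *
      prefixReversal s 3 * prefixReversal s (k + 1) * prefixReversal s (k - 1) *
      prefixReversal s (k + 1) = 1 := by
  obtain ⟨m, rfl⟩ : ∃ m, k = m + 1 := ⟨k - 1, by omega⟩
  have hC : prefixCycle s (m + 1) * s m = s (m + 1) * prefixCycle s (m + 1) :=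
    h.prefixCycle_mul (by omega) (by omega) hkN
  have hCs : prefixCycle s (m + 1) * s (m + 1) = prefixCycle s m := by
    rw [prefixCycle_succ, mul_assoc, h.mul_self _ (by omega) hkN, mul_one]
  calc _ = (prefixReversal s (m + 1) * prefixReversal s m) ^ 2 *
          (prefixReversal s (m + 2) * prefixReversal s 3 * prefixReversal s (m + 2)) *
          (prefixReversal s m * prefixReversal s (m + 2)) := by
        simp only [Nat.add_sub_cancel, mul_assoc]
    _ = prefixCycle s m * prefixCycle s m * (s (m + 1) * s m * s (m + 1)) *
          ((prefixCycle s m)⁻¹ * (prefixCycle s (m + 1))⁻¹) := by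
        rw [h.prefixReversal_succ_mul (by omega), h.prefixReversal_conj_three (by omega) hkN,
          h.prefixReversal_mul_add_two hkN, sq]
    _ = prefixCycle s m * (prefixCycle s (m + 1) * s m) * s (m + 1) * (prefixCycle s m)⁻¹ *
          (prefixCycle s (m + 1))⁻¹ := by
        rw [prefixCycle_succ]; group
    _ = prefixCycle s m * s (m + 1) * (prefixCycle s (m + 1) * s (m + 1)) *
          (prefixCycle s m)⁻¹ * (prefixCycle s (m + 1))⁻¹ := by
        rw [hC]; group
    _ = 1 := by rw [hCs, prefixCycle_succ]; group

lemma prefixReversal_rd10 {l k : ℕ} (hk : 2 ≤ k) (hkl : k ≤ l) (hl : l ≤ N + 1) :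
    prefixReversal s l * prefixReversal s (l - k + 2) * prefixReversal s 2 *
      prefixReversal s (l - k + 2) * prefixReversal s l * prefixReversal s k *
      prefixReversal s 2 * prefixReversal s k = 1 := by
  calc _ = prefixReversal s l *
          (prefixReversal s (l - k + 2) * prefixReversal s 2 * prefixReversal s (l - k + 2)) *
          prefixReversal s l * (prefixReversal s k * prefixReversal s 2 * prefixReversal s k) := by
        simp only [mul_assoc]
    _ = s (k - 1) * s (k - 1) := by
        rw [h.prefixReversal_conj_two (by omega) (by omega),
          h.prefixReversal_conj_two hk (by omega),
          h.prefixReversal_conj (by omega) (by omega) hl]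
        congr 2; omega
    _ = 1 := h.mul_self _ (by omega) (by omega)

end TypeARelations_s2

end TypeA

section CoxeterSide

variable (n : ℕ)

def sH (i : ℕ) : PresentedGroup (coxRelsD n) := PresentedGroup.mk _ (sD n i)

def s0H : PresentedGroup (coxRelsD n) := PresentedGroup.mk _ (s0D n)

variable {n}

lemma sH_eq_of {i : ℕ} (hi : 1 ≤ i ∧ i ≤ n - 1) : sH n i = PresentedGroup.of (some ⟨i, hi⟩) := by
  rw [sH, sD, dif_pos hi]; rfl

lemma sH_mul_self (i : ℕ) : sH n i * sH n i = 1 := by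
  by_cases hi : 1 ≤ i ∧ i ≤ n - 1
  · simpa [sH, sq] using
      PresentedGroup.one_of_mem (rels := coxRelsD n) (Or.inl ⟨i, hi.1, hi.2, rfl⟩)
  · simp [sH, sD, dif_neg hi]

lemma s0H_mul_self : s0H n * s0H n = 1 := by
  simpa [s0H, sq] using PresentedGroup.one_of_mem (rels := coxRelsD n) (Or.inr (Or.inl rfl))

lemma s0H_mul_sH_two_pow_three : (s0H n * sH n 2) ^ 3 = 1 := by
  simpa [s0H, sH] using
    PresentedGroup.one_of_mem (rels := coxRelsD n) (Or.inr (Or.inr (Or.inl rfl)))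

lemma s0H_mul_sH_pow_two {i : ℕ} (hi : i = 1 ∨ 3 ≤ i ∧ i ≤ n - 1) : (s0H n * sH n i) ^ 2 = 1 := by
  simpa [s0H, sH] using PresentedGroup.one_of_mem (rels := coxRelsD n)
    (Or.inr (Or.inr (Or.inr (Or.inr (Or.inl ⟨i, hi, rfl⟩)))))

lemma typeARelations_sH : TypeARelations_s2 (sH n) (n - 1) where
  mul_self i _ _ := sH_mul_self i
  commute i j hi hij hj := by
    rw [← mul_pow_two_eq_one_iff_commute (sH_mul_self i) (sH_mul_self j)]
    simpa [sH] using PresentedGroup.one_of_mem (rels := coxRelsD n)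
      (Or.inr (Or.inr (Or.inr (Or.inr (Or.inr ⟨i, j, hi, by omega, hij, hj, rfl⟩)))))
  braid i hi hin := by
    rw [← mul_pow_three_eq_one_iff (sH_mul_self i) (sH_mul_self (i + 1))]
    simpa [sH] using PresentedGroup.one_of_mem (rels := coxRelsD n)
      (Or.inr (Or.inr (Or.inr (Or.inl ⟨i, hi, by omega, rfl⟩))))

lemma hom_ext_coxRelsD {K : Type*} [Group K] {f g : PresentedGroup (coxRelsD n) →* K}
    (h0 : f (s0H n) = g (s0H n)) (hs : ∀ i, 1 ≤ i → i ≤ n - 1 → f (sH n i) = g (sH n i)) :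
    f = g := by
  refine PresentedGroup.ext ?_
  rintro (_ | ⟨i, hi⟩)
  · exact h0
  · have h := hs i hi.1 hi.2
    rwa [sH_eq_of hi] at h

end CoxeterSide

section PrefixReversalToCoxeter

variable (n : ℕ)

def revToCox : GenD n → PresentedGroup (coxRelsD n) :=
  fun x => x.elim (s0H n) fun k => prefixReversal (sH n) k.1

variable {n}

lemma lift_revToCox_rbD : FreeGroup.lift (revToCox n) (rbD n) = s0H n :=
  FreeGroup.lift_apply_of

lemma lift_revToCox_rD {k : ℕ} (hk2 : 2 ≤ k) (hkn : k ≤ n) :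
    FreeGroup.lift (revToCox n) (rD n k) = prefixReversal (sH n) k := by
  rw [rD, dif_pos ⟨hk2, hkn⟩]; exact FreeGroup.lift_apply_of

theorem lift_revToCox_eq_one (hn : 3 ≤ n) : ∀ r ∈ relsD n, FreeGroup.lift (revToCox n) r = 1 := by
  have h := typeARelations_sH (n := n)
  rintro r (rfl | ⟨k, hk, hkn, rfl⟩ | rfl | rfl | ⟨k, hk, hkn, rfl⟩ | rfl | ⟨k, hk, hkn, rfl⟩ |
    ⟨k, hk, hkn, rfl⟩ | ⟨k, hk, hkn, rfl⟩ | ⟨l, k, hl, hln, hk, hkl, rfl⟩) <;>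
    simp (disch := omega) only [map_mul, map_pow, lift_revToCox_rbD, lift_revToCox_rD]
  · rw [sq, s0H_mul_self]
  · rw [sq, h.prefixReversal_mul_self (by omega)]
  · rw [prefixReversal_two]; exact s0H_mul_sH_pow_two (Or.inl rfl)
  · exact h.prefixReversal_rd4 (by omega)
  · exact h.prefixReversal_rd5 hk (by omega)
  · rw [mul_assoc _ (prefixReversal _ 2), mul_assoc, ← mul_assoc (prefixReversal _ 3),
      h.prefixReversal_conj_two (by omega) (by omega)]
    exact s0H_mul_sH_two_pow_three
  · rw [mul_assoc _ (prefixReversal _ 2), mul_assoc, ← mul_assoc (prefixReversal _ k),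
      h.prefixReversal_conj_two (by omega) (by omega)]
    exact s0H_mul_sH_pow_two (Or.inr ⟨by omega, by omega⟩)
  · exact h.prefixReversal_rd8 (by omega) hkn
  · exact h.prefixReversal_rd9 (by omega) hkn
  · exact h.prefixReversal_rd10 (by omega) (by omega) (by omega)

end PrefixReversalToCoxeter

section PrefixReversalSide

variable (n : ℕ)

def rG (k : ℕ) : PresentedGroup (relsD n) := PresentedGroup.mk _ (rD n k)

def rbG : PresentedGroup (relsD n) := PresentedGroup.mk _ (rbD n)

-- Conjugating `r_2 = (1 2)` by the reversal `r_{i+1}` of `1, …, i+1` gives the transposition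
-- `(i i+1)`.
def uG (i : ℕ) : PresentedGroup (relsD n) := rG n (i + 1) * rG n 2 * rG n (i + 1)

variable {n}

lemma rG_eq_of {k : ℕ} (hk : 2 ≤ k ∧ k ≤ n) : rG n k = PresentedGroup.of (some ⟨k, hk⟩) := by
  rw [rG, rD, dif_pos hk]; rfl

lemma hom_ext_relsD {K : Type*} [Group K] {f g : PresentedGroup (relsD n) →* K}
    (hb : f (rbG n) = g (rbG n)) (hr : ∀ k, 2 ≤ k → k ≤ n → f (rG n k) = g (rG n k)) : f = g := by
  refine PresentedGroup.ext ?_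
  rintro (_ | ⟨k, hk⟩)
  · exact hb
  · have h := hr k hk.1 hk.2
    rwa [rG_eq_of hk] at h

lemma rG_mul_self (k : ℕ) : rG n k * rG n k = 1 := by
  by_cases hk : 2 ≤ k ∧ k ≤ n
  · simpa [rG, sq] using
      PresentedGroup.one_of_mem (rels := relsD n) (Or.inr (Or.inl ⟨k, hk.1, hk.2, rfl⟩))
  · simp [rG, rD, dif_neg hk]

lemma rG_mul_rG_mul (k : ℕ) (x : PresentedGroup (relsD n)) : rG n k * (rG n k * x) = x := by
  rw [← mul_assoc, rG_mul_self, one_mul]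

lemma rG_inv (k : ℕ) : (rG n k)⁻¹ = rG n k := inv_eq_of_mul_eq_one_right (rG_mul_self k)

lemma rbG_mul_self : rbG n * rbG n = 1 := by
  simpa [rbG, sq] using PresentedGroup.one_of_mem (rels := relsD n) (Or.inl rfl)

lemma rG_rd3 : (rbG n * rG n 2) ^ 2 = 1 := by
  simpa [rbG, rG] using PresentedGroup.one_of_mem (rels := relsD n) (Or.inr (Or.inr (Or.inl rfl)))

lemma rG_rd4 : (rG n 2 * rG n 3) ^ 3 = 1 := by
  simpa [rG] using
    PresentedGroup.one_of_mem (rels := relsD n) (Or.inr (Or.inr (Or.inr (Or.inl rfl))))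

lemma rG_rd5 {k : ℕ} (hk : 4 ≤ k) (hkn : k ≤ n) : (rG n 2 * rG n k) ^ 4 = 1 := by
  simpa [rG] using PresentedGroup.one_of_mem (rels := relsD n)
    (Or.inr (Or.inr (Or.inr (Or.inr (Or.inl ⟨k, hk, hkn, rfl⟩)))))

lemma rG_rd6 : (rbG n * rG n 3 * rG n 2 * rG n 3) ^ 3 = 1 := by
  simpa [rbG, rG] using PresentedGroup.one_of_mem (rels := relsD n)
    (Or.inr (Or.inr (Or.inr (Or.inr (Or.inr (Or.inl rfl))))))

lemma rG_rd7 {k : ℕ} (hk : 4 ≤ k) (hkn : k ≤ n) : (rbG n * rG n k * rG n 2 * rG n k) ^ 2 = 1 := by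
  simpa [rbG, rG] using PresentedGroup.one_of_mem (rels := relsD n)
    (Or.inr (Or.inr (Or.inr (Or.inr (Or.inr (Or.inr (Or.inl ⟨k, hk, hkn, rfl⟩)))))))

lemma rG_rd8 {k : ℕ} (hk : 3 ≤ k) (hkn : k ≤ n - 1) :
    rG n k * rG n (k - 1) * rG n (k + 1) * rG n 2 * rG n (k + 1) * rG n k * rG n (k + 1) = 1 := by
  simpa [rG] using PresentedGroup.one_of_mem (rels := relsD n)
    (Or.inr (Or.inr (Or.inr (Or.inr (Or.inr (Or.inr (Or.inr (Or.inl ⟨k, hk, hkn, rfl⟩))))))))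

lemma rG_rd9 {k : ℕ} (hk : 3 ≤ k) (hkn : k ≤ n - 1) :
    (rG n k * rG n (k - 1)) ^ 2 * rG n (k + 1) * rG n 3 * rG n (k + 1) * rG n (k - 1) *
      rG n (k + 1) = 1 := by
  simpa [rG] using PresentedGroup.one_of_mem (rels := relsD n)
    (Or.inr (Or.inr (Or.inr (Or.inr (Or.inr (Or.inr (Or.inr (Or.inr (Or.inl
      ⟨k, hk, hkn, rfl⟩)))))))))

lemma rG_rd10 {l k : ℕ} (hl : 4 ≤ l) (hln : l ≤ n) (hk : 3 ≤ k) (hkl : k ≤ l - 2) :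
    rG n l * rG n (l - k + 2) * rG n 2 * rG n (l - k + 2) * rG n l * rG n k * rG n 2 *
      rG n k = 1 := by
  simpa [rG] using PresentedGroup.one_of_mem (rels := relsD n)
    (Or.inr (Or.inr (Or.inr (Or.inr (Or.inr (Or.inr (Or.inr (Or.inr (Or.inr
      ⟨l, k, hl, hln, hk, hkl, rfl⟩)))))))))

lemma uG_mul_self (i : ℕ) : uG n i * uG n i = 1 := by
  simp only [uG, mul_assoc, rG_mul_rG_mul, rG_mul_self]

lemma uG_inv (i : ℕ) : (uG n i)⁻¹ = uG n i := inv_eq_of_mul_eq_one_right (uG_mul_self i)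

lemma uG_one : uG n 1 = rG n 2 := by
  simp only [uG, mul_assoc, rG_mul_rG_mul]

lemma uG_eq_of_rd8 {k : ℕ} (hk : 3 ≤ k) (hkn : k ≤ n - 1) :
    uG n k = rG n (k - 1) * rG n k * rG n (k + 1) * rG n k := by
  have h := rG_rd8 hk hkn
  rw [show rG n k * rG n (k - 1) * rG n (k + 1) * rG n 2 * rG n (k + 1) * rG n k * rG n (k + 1) =
    rG n k * rG n (k - 1) * uG n k * (rG n k * rG n (k + 1)) by simp only [uG, mul_assoc]] at h
  rw [eq_inv_mul_of_mul_eq (eq_inv_of_mul_eq_one_left h)]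
  simp only [mul_inv_rev, rG_inv, mul_assoc]

lemma prefixReversal_uG {k : ℕ} (hk : 2 ≤ k) (hkn : k ≤ n) : prefixReversal (uG n) k = rG n k := by
  induction k using Nat.strong_induction_on with
  | _ k ih =>
    rcases (show k = 2 ∨ k = 3 ∨ 4 ≤ k by omega) with rfl | rfl | hk4
    · rw [prefixReversal_two, uG_one]
    · rw [prefixReversal_three, uG_one, show uG n 2 = rG n 3 * rG n 2 * rG n 3 from rfl,
        ← (mul_pow_three_eq_one_iff (rG_mul_self 2) (rG_mul_self 3)).1 rG_rd4]
      simp only [mul_assoc, rG_mul_rG_mul, rG_mul_self, mul_one]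
    · obtain ⟨m, rfl⟩ : ∃ m, k = m + 2 := ⟨k - 2, by omega⟩
      rw [prefixReversal_add_two, ih (m + 1) (by omega) (by omega) (by omega), ih m (by omega)
        (by omega) (by omega), uG_eq_of_rd8 (by omega) (by omega), rG_inv]
      simp only [Nat.add_sub_cancel, mul_assoc, rG_mul_rG_mul, rG_mul_self, mul_one]

lemma conj_rG_uG_of_three_le {l j : ℕ} (hj : 3 ≤ j) (hjl : j + 2 ≤ l) (hln : l ≤ n) :
    MulAut.conj (rG n l) (uG n j) = uG n (l - j) := by
  have h := rG_rd10 (k := l - j + 1) (by omega) hln (by omega) (by omega)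
  rw [show l - (l - j + 1) + 2 = j + 1 by omega,
    show rG n l * rG n (j + 1) * rG n 2 * rG n (j + 1) * rG n l * rG n (l - j + 1) * rG n 2 *
      rG n (l - j + 1) = rG n l * uG n j * rG n l * uG n (l - j) by simp only [uG, mul_assoc]] at h
  rw [MulAut.conj_apply, rG_inv, eq_inv_of_mul_eq_one_left h, uG_inv]

lemma conj_rG_four_uG_two (hn : 4 ≤ n) : MulAut.conj (rG n 4) (uG n 2) = uG n 2 := by
  rw [MulAut.conj_apply, rG_inv]
  exact conj_eq_of_rd4_rd8_rd9 (rG_mul_self 2) (rG_mul_self 3) (rG_mul_self 4) rG_rd4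
    (rG_rd8 (k := 3) le_rfl (by omega)) (rG_rd9 (k := 3) le_rfl (by omega))

lemma conj_rG_uG {l j : ℕ} (hj : 1 ≤ j) (hjl : j < l) (hln : l ≤ n) :
    MulAut.conj (rG n l) (uG n j) = uG n (l - j) := by
  have hinvol : ∀ x, MulAut.conj (rG n l) (MulAut.conj (rG n l) x) = x := fun x => by
    simp only [MulAut.conj_apply, rG_inv, mul_assoc, rG_mul_self, rG_mul_rG_mul, mul_one]
  rcases (show j = 1 ∨ j + 1 = l ∨ 3 ≤ j ∧ j + 2 ≤ l ∨ 2 ≤ j ∧ j + 3 ≤ l ∨ l = 4 ∧ j = 2 by omega)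
    with rfl | rfl | ⟨hj3, hjl2⟩ | ⟨hj2, hjl3⟩ | ⟨rfl, rfl⟩
  · rw [uG_one, MulAut.conj_apply, rG_inv, uG, Nat.sub_add_cancel (by omega)]
  · rw [MulAut.conj_apply, rG_inv, Nat.add_sub_cancel_left, uG_one, uG]
    simp only [mul_assoc, rG_mul_self, rG_mul_rG_mul, mul_one]
  · exact conj_rG_uG_of_three_le hj3 hjl2 hln
  · have h := conj_rG_uG_of_three_le (l := l) (j := l - j) (by omega) (by omega) hln
    rw [Nat.sub_sub_self (by omega)] at h
    rw [← h, hinvol]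
  · exact conj_rG_four_uG_two hln

lemma commute_uG_one {m : ℕ} (hm : 3 ≤ m) (hmn : m + 1 ≤ n) : Commute (uG n 1) (uG n m) := by
  rw [← mul_pow_two_eq_one_iff_commute (uG_mul_self 1) (uG_mul_self m), uG_one, uG,
    ← rG_rd5 (k := m + 1) (by omega) hmn]
  simp only [pow_succ, pow_zero, one_mul, mul_assoc]

lemma uG_one_braid : uG n 1 * uG n 2 * uG n 1 = uG n 2 * uG n 1 * uG n 2 := by
  rw [← mul_pow_three_eq_one_iff (uG_mul_self 1) (uG_mul_self 2),
    show uG n 1 * uG n 2 = (rG n 2 * rG n 3) ^ 2 by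
      rw [uG_one, sq]; simp only [uG, mul_assoc],
    ← pow_mul, show 2 * 3 = 3 * 2 from rfl, pow_mul, rG_rd4, one_pow]

lemma typeARelations_uG (hn : 4 ≤ n) : TypeARelations_s2 (uG n) (n - 1) where
  mul_self i _ _ := uG_mul_self i
  commute i j hi hij hjn := by
    have h1 := conj_rG_uG (n := n) (l := j + 1) (j := j + 1 - i) (by omega) (by omega) (by omega)
    have h2 := conj_rG_uG (n := n) (l := j + 1) (j := 1) le_rfl (by omega) (by omega)
    rw [Nat.sub_sub_self (by omega)] at h1
    rw [Nat.add_sub_cancel] at h2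
    rw [← h1, ← h2]
    exact ((commute_uG_one (by omega) (by omega)).symm).map _
  braid i hi hin := by
    rcases Nat.lt_or_ge i 2 with hi2 | hi2
    · obtain rfl : i = 1 := by omega
      exact uG_one_braid
    · have h1 := conj_rG_uG (n := n) (l := i + 2) (j := 2) (by omega) (by omega) (by omega)
      have h2 := conj_rG_uG (n := n) (l := i + 2) (j := 1) le_rfl (by omega) (by omega)
      rw [Nat.add_sub_cancel] at h1
      rw [show i + 2 - 1 = i + 1 by omega] at h2
      simpa only [map_mul, h1, h2] using congrArg (MulAut.conj (rG n (i + 2))) uG_one_braid.symm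

end PrefixReversalSide

section CoxeterToPrefixReversal

variable (n : ℕ)

def coxToRev : CoxGenD n → PresentedGroup (relsD n) :=
  fun x => x.elim (rbG n) fun i => uG n i.1

variable {n}

lemma lift_coxToRev_s0D : FreeGroup.lift (coxToRev n) (s0D n) = rbG n :=
  FreeGroup.lift_apply_of

lemma lift_coxToRev_sD {i : ℕ} (hi : 1 ≤ i) (hin : i ≤ n - 1) :
    FreeGroup.lift (coxToRev n) (sD n i) = uG n i := by
  rw [sD, dif_pos ⟨hi, hin⟩]; exact FreeGroup.lift_apply_of

theorem lift_coxToRev_eq_one (hn : 4 ≤ n) :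
    ∀ r ∈ coxRelsD n, FreeGroup.lift (coxToRev n) r = 1 := by
  have h := typeARelations_uG hn
  rintro r (⟨i, hi, hin, rfl⟩ | rfl | rfl | ⟨i, hi, hin, rfl⟩ | ⟨i, hi, rfl⟩ |
    ⟨i, j, hi, hin, hij, hjn, rfl⟩) <;>
    simp (disch := omega) only [map_mul, map_pow, lift_coxToRev_s0D, lift_coxToRev_sD]
  · rw [sq, uG_mul_self]
  · rw [sq, rbG_mul_self]
  · simpa only [uG, mul_assoc] using rG_rd6
  · exact (mul_pow_three_eq_one_iff (uG_mul_self i) (uG_mul_self (i + 1))).2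
      (h.braid i hi (by omega))
  · rcases hi with rfl | ⟨hi, hin⟩
    · rw [uG_one]; exact rG_rd3
    · simpa only [uG, mul_assoc] using rG_rd7 (k := i + 1) (by omega) (by omega)
  · exact (mul_pow_two_eq_one_iff_commute (uG_mul_self i) (uG_mul_self j)).2
      (h.commute i j hi hij hjn)

end CoxeterToPrefixReversal

theorem stmt2 (n : ℕ) (hn : 3 < n) :
    Nonempty (PresentedGroup (relsD n) ≃* PresentedGroup (coxRelsD n)) := by
  let φ := PresentedGroup.toGroup (lift_revToCox_eq_one (n := n) hn.le)
  let ψ := PresentedGroup.toGroup (lift_coxToRev_eq_one (n := n) hn)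
  have hφ {k : ℕ} (hk : 2 ≤ k) (hkn : k ≤ n) : φ (rG n k) = prefixReversal (sH n) k :=
    lift_revToCox_rD hk hkn
  have hψ {i : ℕ} (hi : 1 ≤ i) (hin : i ≤ n - 1) : ψ (sH n i) = uG n i := lift_coxToRev_sD hi hin
  refine ⟨MonoidHom.toMulEquiv φ ψ (hom_ext_relsD rfl fun k hk hkn => ?_)
    (hom_ext_coxRelsD rfl fun i hi hin => ?_)⟩
  · rw [MonoidHom.comp_apply, hφ hk hkn, map_prefixReversal _ _ fun i hi hik => hψ hi (by omega),
      prefixReversal_uG hk hkn, MonoidHom.id_apply]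
  · rw [MonoidHom.comp_apply, hψ hi hin, uG, map_mul, map_mul, hφ (by omega) (by omega),
      hφ le_rfl (by omega), (typeARelations_sH (n := n)).prefixReversal_conj_two (by omega)
      (by omega), Nat.add_sub_cancel, MonoidHom.id_apply]
end

section
/- Let n > 3, let G be a group, and let r_2, …, r_n ∈ G satisfy the relations (R1)–(R6). Define s_{i-1} = r_i r_2 r_i for all i ∈ [2,n], and assume the elements s_1, …, s_{n-1} satisfy the type A Coxeter relations. Then for every k ∈ [2,n], r_k = s_1 (s_2 s_1) (s_3 s_2 s_1) ⋯ (s_{k-1} s_{k-2} ⋯ s_3 s_2 s_1). -/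
/-!
Each product of two consecutive generators is a descending word: `r k * r (k + 1) = s_k ⋯ s_1`.
For `k = 2` this is the braid relation (R2) read through `s_1 = r_2` and `s_2 = r_3 r_2 r_3`; the
step from `k` to `k + 1` is (R5), which says `s_{k+1} (r_{k+1} r_{k+2}) = r_k r_{k+1}`.
Since the `r_k` are involutions, `r_{k+1} = r_k (r_k r_{k+1})`, and the closed formula for `r_k`
follows by induction on `k`.
-/

/-- The word `s₁ (s₂ s₁) (s₃ s₂ s₁) ⋯ (s_{k-1} s_{k-2} ⋯ s₂ s₁)` in a group. -/
def rwordA {G : Type*} [Group G] (s : ℕ → G) (k : ℕ) : G :=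
  ((List.range (k - 1)).map (fun j => ((List.range (j + 1)).map (fun i => s (j + 1 - i))).prod)).prod

namespace CoxeterWord

variable {G : Type*} [Group G]

/-- The descending word `s_j s_{j-1} ⋯ s_1`. -/
def descWord (s : ℕ → G) (j : ℕ) : G :=
  ((List.range j).map (fun i => s (j - i))).prod

lemma descWord_zero (s : ℕ → G) : descWord s 0 = 1 := rfl

lemma descWord_succ (s : ℕ → G) (j : ℕ) : descWord s (j + 1) = s (j + 1) * descWord s j := by
  simp [descWord, List.range_succ_eq_map, List.map_map, Function.comp_def]

lemma rwordA_two (s : ℕ → G) : rwordA s 2 = s 1 := by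
  simp [rwordA, List.range_succ]

lemma rwordA_succ_succ (s : ℕ → G) (m : ℕ) :
    rwordA s (m + 2) = rwordA s (m + 1) * descWord s (m + 1) := by
  simp [rwordA, descWord, List.range_succ]

lemma mul_mul_mul_eq_of_pow_three {a b : G} (ha : a * a = 1) (hb : b * b = 1)
    (hab : (a * b) ^ 3 = 1) : b * a * b * a = a * b := by
  have h : b * a * b * a = a⁻¹ * (a * b * (a * b) * (a * b)) * b⁻¹ := by group
  rw [h, ← pow_three', hab, mul_one, inv_eq_of_mul_eq_one_right ha, inv_eq_of_mul_eq_one_right hb]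

lemma conj_mul_self {g a : G} (hg : g * g = 1) (ha : a * a = 1) : g * a * g * (g * a * g) = 1 := by
  simp only [mul_assoc]
  rw [← mul_assoc g g, hg, one_mul, ← mul_assoc a a, ha, one_mul, hg]

lemma eq_mul_of_mul_mul_mul_eq_one {a b c x : G} (ha : a * a = 1) (hb : b * b = 1)
    (hc : c * c = 1) (h : b * a * c * x = 1) : x = c * (a * b) := by
  rw [eq_inv_of_mul_eq_one_right h]
  simp only [mul_inv_rev, inv_eq_of_mul_eq_one_right ha, inv_eq_of_mul_eq_one_right hb,
    inv_eq_of_mul_eq_one_right hc, mul_assoc]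

section Generators

variable {n : ℕ} {r s : ℕ → G}

lemma mul_succ_eq_descWord (hR1 : ∀ k, 2 ≤ k → k ≤ n → r k * r k = 1)
    (hR2 : (r 2 * r 3) ^ 3 = 1)
    (hR5 : ∀ k, 3 ≤ k → k ≤ n - 1 →
      r k * r (k - 1) * r (k + 1) * r 2 * r (k + 1) * r k * r (k + 1) = 1)
    (hs : ∀ i, 2 ≤ i → i ≤ n → s (i - 1) = r i * r 2 * r i) (hs1 : s 1 = r 2) :
    ∀ k, 2 ≤ k → k + 1 ≤ n → r k * r (k + 1) = descWord s k := by
  intro k hk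
  induction k, hk using Nat.le_induction with
  | base =>
    intro h3n
    have hs2 : s 2 = r 3 * r 2 * r 3 := hs 3 (by omega) h3n
    rw [descWord_succ, descWord_succ, descWord_zero, mul_one, hs1, hs2]
    exact (mul_mul_mul_eq_of_pow_three (hR1 2 le_rfl (by omega)) (hR1 3 (by omega) h3n) hR2).symm
  | succ k hk ih =>
    intro hkn
    have hsk : s (k + 1) = r (k + 2) * r 2 * r (k + 2) := hs (k + 2) (by omega) hkn
    rw [descWord_succ, ← ih (by omega)]
    refine eq_mul_of_mul_mul_mul_eq_one (hR1 k hk (by omega)) (hR1 (k + 1) (by omega) (by omega))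
      (hsk ▸ conj_mul_self (hR1 (k + 2) (by omega) hkn) (hR1 2 le_rfl (by omega))) ?_
    simpa only [hsk, mul_assoc, Nat.add_sub_cancel] using hR5 (k + 1) (by omega) (by omega)

lemma eq_rwordA_of_mul_succ_eq_descWord (hR1 : ∀ k, 2 ≤ k → k ≤ n → r k * r k = 1)
    (hs1 : s 1 = r 2) (hstep : ∀ k, 2 ≤ k → k + 1 ≤ n → r k * r (k + 1) = descWord s k) :
    ∀ k, 2 ≤ k → k ≤ n → r k = rwordA s k := by
  intro k hk
  induction k, hk using Nat.le_induction with
  | base => intro _; rw [rwordA_two, hs1]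
  | succ k hk ih =>
    intro hkn
    obtain ⟨m, rfl⟩ : ∃ m, k = m + 1 := ⟨k - 1, by omega⟩
    calc r (m + 2) = r (m + 1) * (r (m + 1) * r (m + 2)) := by
          rw [← mul_assoc, hR1 (m + 1) hk (by omega), one_mul]
      _ = rwordA s (m + 2) := by
          rw [hstep (m + 1) hk hkn, ih (by omega), rwordA_succ_succ]

end Generators

end CoxeterWord

open CoxeterWord

theorem stmt3_general (n : ℕ) (G : Type*) [Group G] (r s : ℕ → G)
    (hR1 : ∀ k, 2 ≤ k → k ≤ n → r k * r k = 1)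
    (hR2 : (r 2 * r 3) ^ 3 = 1)
    (hR5 : ∀ k, 3 ≤ k → k ≤ n - 1 →
      r k * r (k - 1) * r (k + 1) * r 2 * r (k + 1) * r k * r (k + 1) = 1)
    (hs : ∀ i, 2 ≤ i → i ≤ n → s (i - 1) = r i * r 2 * r i) :
    ∀ k, 2 ≤ k → k ≤ n → r k = rwordA s k := by
  intro k hk hkn
  have hs1 : s 1 = r 2 := by
    rw [show s 1 = s (2 - 1) from rfl, hs 2 le_rfl (by omega), hR1 2 le_rfl (by omega), one_mul]
  exact eq_rwordA_of_mul_succ_eq_descWord hR1 hs1 (mul_succ_eq_descWord hR1 hR2 hR5 hs hs1) k hk hkn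

theorem stmt3 (n : ℕ) (hn : 3 < n) (G : Type*) [Group G] (r s : ℕ → G)
    (hR1 : ∀ k, 2 ≤ k → k ≤ n → r k * r k = 1)
    (hR2 : (r 2 * r 3) ^ 3 = 1)
    (hR3 : ∀ k, 4 ≤ k → k ≤ n → (r 2 * r k) ^ 4 = 1)
    (hR4 : ∀ l k, 4 ≤ l → l ≤ n → 3 ≤ k → k ≤ l - 1 →
      r l * r (l - k + 2) * r 2 * r (l - k + 2) * r l * r k * r 2 * r k = 1)
    (hR5 : ∀ k, 3 ≤ k → k ≤ n - 1 →
      r k * r (k - 1) * r (k + 1) * r 2 * r (k + 1) * r k * r (k + 1) = 1)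
    (hR6 : ∀ k, 3 ≤ k → k ≤ n - 1 →
      (r k * r (k - 1)) ^ 2 * r (k + 1) * r 3 * r (k + 1) * r (k - 1) * r (k + 1) = 1)
    (hs : ∀ i, 2 ≤ i → i ≤ n → s (i - 1) = r i * r 2 * r i)
    (hA1 : ∀ i, 1 ≤ i → i ≤ n - 1 → s i * s i = 1)
    (hA2 : ∀ i, 1 ≤ i → i ≤ n - 2 → (s i * s (i + 1)) ^ 3 = 1)
    (hA3 : ∀ i j, 1 ≤ i → i ≤ n - 3 → i + 2 ≤ j → j ≤ n - 1 → (s i * s j) ^ 2 = 1) :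
    ∀ k, 2 ≤ k → k ≤ n → r k = rwordA s k :=
  stmt3_general n G r s hR1 hR2 hR5 hs
end

section
/- Let n > 3, let G be a group, and let r_2, …, r_n ∈ G satisfy the relations (R1)–(R6). Define s_{i-1} = r_i r_2 r_i for all i ∈ [2,n], and assume the elements s_1, …, s_{n-1} satisfy the type A Coxeter relations. Then for every k ∈ [3,n], r_k r_3 r_k = s_{k-2} s_{k-1} s_{k-2}. -/
section BraidRelation

variable {G : Type*} [Group G] {a b : G}

theorem mul_mul_mul_mul_eq_inv_of_mul_pow_three (h : (a * b) ^ 3 = 1) :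
    a * b * a * b * a = b⁻¹ := by
  rw [eq_inv_iff_mul_eq_one, ← h, pow_three]
  group

theorem mul_mul_mul_mul_mul_mul_eq_self_of_mul_pow_three (h : (a * b) ^ 3 = 1) :
    b * a * b * a * (b * a * b) = b := by
  calc b * a * b * a * (b * a * b) = b * (a * b * a * b * a) * b := by group
    _ = b := by rw [mul_mul_mul_mul_eq_inv_of_mul_pow_three h, mul_inv_cancel, one_mul]

end BraidRelation

theorem stmt6_general (n : ℕ) (G : Type*) [Group G] (r s : ℕ → G)
    (hR1 : ∀ k, 2 ≤ k → k ≤ n → r k * r k = 1)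
    (hR2 : (r 2 * r 3) ^ 3 = 1)
    (hR4 : ∀ l k, 4 ≤ l → l ≤ n → 3 ≤ k → k ≤ l - 1 →
      r l * r (l - k + 2) * r 2 * r (l - k + 2) * r l * r k * r 2 * r k = 1)
    (hs : ∀ i, 2 ≤ i → i ≤ n → s (i - 1) = r i * r 2 * r i) :
    ∀ k, 3 ≤ k → k ≤ n → r k * r 3 * r k = s (k - 2) * s (k - 1) * s (k - 2) := by
  intro k hk3 hkn
  have hinv : ∀ i, 2 ≤ i → i ≤ n → (r i)⁻¹ = r i := fun i hi hin =>
    inv_eq_of_mul_eq_one_right (hR1 i hi hin)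
  obtain rfl | hk4 := hk3.eq_or_lt
  · have hs1 : s 1 = r 2 := by rw [hs 2 le_rfl (by omega), hR1 2 le_rfl (by omega), one_mul]
    rw [hs 3 (by norm_num) hkn, hs1, hR1 3 (by norm_num) hkn, one_mul]
    simpa only [mul_assoc, hinv 3 (by norm_num) hkn] using
      (mul_mul_mul_mul_eq_inv_of_mul_pow_three hR2).symm
  · have hconj : ∀ x, r k * x * r k = MulAut.conj (r k) x := fun x => by
      rw [MulAut.conj_apply, hinv k (by omega) hkn]
    have hsk : s (k - 2) = r k * (r 3 * r 2 * r 3) * r k := by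
      have h4 := hR4 k (k - 1) hk4 hkn (by omega) (by omega)
      rw [show k - (k - 1) + 2 = 3 by omega] at h4
      have h4' : r k * (r 3 * r 2 * r 3) * r k * (r (k - 1) * r 2 * r (k - 1)) = 1 := by
        simpa only [mul_assoc] using h4
      rw [show k - 2 = k - 1 - 1 by omega, hs (k - 1) (by omega) (by omega),
        eq_inv_of_mul_eq_one_right h4']
      simp only [mul_inv_rev, hinv 2 le_rfl (by omega), hinv 3 (by omega) (by omega),
        hinv k (by omega) hkn, mul_assoc]
    rw [hsk, hs k (by omega) hkn]
    simp only [hconj, ← map_mul]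
    rw [mul_mul_mul_mul_mul_mul_eq_self_of_mul_pow_three hR2]

theorem stmt6 (n : ℕ) (hn : 3 < n) (G : Type*) [Group G] (r s : ℕ → G)
    (hR1 : ∀ k, 2 ≤ k → k ≤ n → r k * r k = 1)
    (hR2 : (r 2 * r 3) ^ 3 = 1)
    (hR3 : ∀ k, 4 ≤ k → k ≤ n → (r 2 * r k) ^ 4 = 1)
    (hR4 : ∀ l k, 4 ≤ l → l ≤ n → 3 ≤ k → k ≤ l - 1 →
      r l * r (l - k + 2) * r 2 * r (l - k + 2) * r l * r k * r 2 * r k = 1)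
    (hR5 : ∀ k, 3 ≤ k → k ≤ n - 1 →
      r k * r (k - 1) * r (k + 1) * r 2 * r (k + 1) * r k * r (k + 1) = 1)
    (hR6 : ∀ k, 3 ≤ k → k ≤ n - 1 →
      (r k * r (k - 1)) ^ 2 * r (k + 1) * r 3 * r (k + 1) * r (k - 1) * r (k + 1) = 1)
    (hs : ∀ i, 2 ≤ i → i ≤ n → s (i - 1) = r i * r 2 * r i)
    (hA1 : ∀ i, 1 ≤ i → i ≤ n - 1 → s i * s i = 1)
    (hA2 : ∀ i, 1 ≤ i → i ≤ n - 2 → (s i * s (i + 1)) ^ 3 = 1)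
    (hA3 : ∀ i j, 1 ≤ i → i ≤ n - 3 → i + 2 ≤ j → j ≤ n - 1 → (s i * s j) ^ 2 = 1) :
    ∀ k, 3 ≤ k → k ≤ n → r k * r 3 * r k = s (k - 2) * s (k - 1) * s (k - 2) :=
  stmt6_general n G r s hR1 hR2 hR4 hs
end

section
/- Let n > 3, let G be a group, and let r_1, …, r_n ∈ G satisfy the relations (Rb1)–(Rb8). Define s_0 = r_1 and s_i = r_{i+1} r_1 r_2 r_1 r_{i+1} for i ∈ [1,n-1], and assume the elements s_0, s_1, …, s_{n-1} satisfy the type B Coxeter relations. Then for every k ∈ [1,n], r_k = s_0 (s_1 s_0) (s_2 s_1 s_0) ⋯ (s_{k-1} s_{k-2} ⋯ s_0). -/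
/-!
Write `T_j = s_j s_{j-1} ⋯ s_0`, so that the word in question is `T_0 T_1 ⋯ T_{k-1}`.
The relations force `T_j = r_j r_{j+1}` for `j ∈ [1, n-1]`: for `j = 1` this is
`(r_2 r_1)^3 = r_1 r_2`, i.e. (Rb3) for `k = 2`, and passing from `j` to `j + 1` is exactly (Rb7).
Since `T_0 = r_1` and the `r_j` are involutions, the product telescopes to `r_k`.
-/

/-- The word `s₀ (s₁ s₀) (s₂ s₁ s₀) ⋯ (s_{k-1} s_{k-2} ⋯ s₁ s₀)` in a group. -/
def rwordB {G : Type*} [Group G] (s : ℕ → G) (k : ℕ) : G :=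
  ((List.range k).map (fun j => ((List.range (j + 1)).map (fun i => s (j - i))).prod)).prod

def descendingWord {G : Type*} [Group G] (s : ℕ → G) (j : ℕ) : G :=
  ((List.range (j + 1)).map (fun i => s (j - i))).prod

section Words

variable {G : Type*} [Group G] (s : ℕ → G)

lemma descendingWord_zero : descendingWord s 0 = s 0 := by
  simp [descendingWord]

lemma descendingWord_succ (j : ℕ) :
    descendingWord s (j + 1) = s (j + 1) * descendingWord s j := by
  rw [descendingWord, List.range_succ_eq_map]
  simp [descendingWord, Function.comp_def, Nat.succ_sub_succ]

lemma rwordB_succ (k : ℕ) : rwordB s (k + 1) = rwordB s k * descendingWord s k :=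
  List.prod_range_succ (descendingWord s) k

lemma rwordB_one : rwordB s 1 = s 0 := by
  rw [rwordB_succ, descendingWord_zero, rwordB, List.range_zero, List.map_nil, List.prod_nil,
    one_mul]

end Words

lemma mul_pow_three_eq_of_mul_pow_four_eq_one {G : Type*} [Group G] {a b : G}
    (ha : a * a = 1) (hb : b * b = 1) (h : (a * b) ^ 4 = 1) :
    b * a * b * a * b * a = a * b := by
  have hba : b * a = (a * b)⁻¹ := by
    rw [mul_inv_rev, inv_eq_of_mul_eq_one_right ha, inv_eq_of_mul_eq_one_right hb]
  calc b * a * b * a * b * a = (b * a) ^ 3 := by simp only [pow_succ, pow_zero, one_mul, mul_assoc]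
    _ = ((a * b) ^ 3)⁻¹ := by rw [hba, inv_pow]
    _ = a * b := by rw [inv_eq_iff_mul_eq_one, ← pow_succ, h]

lemma eq_rwordB_of_descendingWord_eq {G : Type*} [Group G] {r s : ℕ → G} {n : ℕ}
    (hr : ∀ k, 1 ≤ k → k < n → r k * r k = 1) (hs0 : s 0 = r 1)
    (hT : ∀ k, 1 ≤ k → k < n → descendingWord s k = r k * r (k + 1)) :
    ∀ k, 1 ≤ k → k ≤ n → r k = rwordB s k := by
  intro k hk hkn
  induction k, hk using Nat.le_induction with
  | base => rw [rwordB_one, hs0]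
  | succ k hk ih =>
    rw [rwordB_succ, ← ih (by omega), hT k hk (by omega), ← mul_assoc, hr k hk (by omega),
      one_mul]

lemma descendingWord_eq_mul_succ {G : Type*} [Group G] {r s : ℕ → G} {n : ℕ}
    (hr : ∀ k, 1 ≤ k → k ≤ n → r k * r k = 1)
    (hRb3 : ∀ k, 2 ≤ k → k ≤ n → (r 1 * r k) ^ 4 = 1)
    (hRb7 : ∀ k, 2 ≤ k → k ≤ n - 1 →
      r (k + 1) * r 1 * r 2 * r 1 * r (k + 1) * r (k - 1) * r k * r (k + 1) * r k = 1)
    (hs0 : s 0 = r 1)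
    (hs : ∀ i, 1 ≤ i → i ≤ n - 1 → s i = r (i + 1) * r 1 * r 2 * r 1 * r (i + 1)) :
    ∀ k, 1 ≤ k → k < n → descendingWord s k = r k * r (k + 1) := by
  have hinv : ∀ m, 1 ≤ m → m ≤ n → (r m)⁻¹ = r m := fun m h1 h2 =>
    inv_eq_of_mul_eq_one_right (hr m h1 h2)
  intro k hk hkn
  induction k, hk using Nat.le_induction with
  | base =>
    rw [descendingWord_succ, descendingWord_zero, hs 1 le_rfl (by omega), hs0]
    exact mul_pow_three_eq_of_mul_pow_four_eq_one (hr 1 le_rfl (by omega))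
      (hr 2 (by omega) (by omega)) (hRb3 2 le_rfl (by omega))
  | succ k hk ih =>
    have h7 := hRb7 (k + 1) (by omega) (by omega)
    rw [Nat.add_sub_cancel] at h7
    rw [descendingWord_succ, ih (by omega), hs (k + 1) (by omega) (by omega), ← mul_inv_eq_one,
      mul_inv_rev, hinv (k + 1) (by omega) (by omega), hinv (k + 1 + 1) (by omega) (by omega)]
    simpa only [mul_assoc] using h7

theorem stmt10_general (n : ℕ) (G : Type*) [Group G] (r s : ℕ → G)
    (hRb1 : ∀ k, 1 ≤ k → k ≤ n → r k * r k = 1)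
    (hRb3 : ∀ k, 2 ≤ k → k ≤ n → (r 1 * r k) ^ 4 = 1)
    (hRb7 : ∀ k, 2 ≤ k → k ≤ n - 1 →
      r (k + 1) * r 1 * r 2 * r 1 * r (k + 1) * r (k - 1) * r k * r (k + 1) * r k = 1)
    (hs0 : s 0 = r 1)
    (hs : ∀ i, 1 ≤ i → i ≤ n - 1 → s i = r (i + 1) * r 1 * r 2 * r 1 * r (i + 1)) :
    ∀ k, 1 ≤ k → k ≤ n → r k = rwordB s k :=
  eq_rwordB_of_descendingWord_eq (fun k hk hkn => hRb1 k hk hkn.le) hs0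
    (descendingWord_eq_mul_succ hRb1 hRb3 hRb7 hs0 hs)

theorem stmt10 (n : ℕ) (hn : 3 < n) (G : Type*) [Group G] (r s : ℕ → G)
    (hRb1 : ∀ k, 1 ≤ k → k ≤ n → r k * r k = 1)
    (hRb2 : (r 2 * r 3) ^ 6 = 1)
    (hRb3 : ∀ k, 2 ≤ k → k ≤ n → (r 1 * r k) ^ 4 = 1)
    (hRb4 : ∀ k, 4 ≤ k → k ≤ n → (r 1 * r 2 * r 1 * r k) ^ 4 = 1)
    (hRb5 : ∀ k, 3 ≤ k → k ≤ n → (r k * r 1 * r k * r 2) ^ 2 = 1)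
    (hRb6 : ∀ k, 2 ≤ k → k ≤ n - 1 →
      r k * r 1 * r 2 * r 1 * r k * r (k + 1) * r 2 * r 3 * r 2 * r 1 * r (k + 1) = 1)
    (hRb7 : ∀ k, 2 ≤ k → k ≤ n - 1 →
      r (k + 1) * r 1 * r 2 * r 1 * r (k + 1) * r (k - 1) * r k * r (k + 1) * r k = 1)
    (hRb8 : ∀ k l, 2 ≤ k → k ≤ n - 2 → k + 2 ≤ l → l ≤ n →
      r k * r 1 * r 2 * r 1 * r k * r l * r (l - k + 2) * r 1 * r 2 * r 1 * r (l - k + 2) * r l = 1)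
    (hs0 : s 0 = r 1)
    (hs : ∀ i, 1 ≤ i → i ≤ n - 1 → s i = r (i + 1) * r 1 * r 2 * r 1 * r (i + 1))
    (hB1 : ∀ i, i ≤ n - 1 → s i * s i = 1)
    (hB2 : (s 0 * s 1) ^ 4 = 1)
    (hB3 : ∀ i, 1 ≤ i → i ≤ n - 2 → (s i * s (i + 1)) ^ 3 = 1)
    (hB4 : ∀ i j, i ≤ n - 3 → i + 2 ≤ j → j ≤ n - 1 → (s i * s j) ^ 2 = 1) :
    ∀ k, 1 ≤ k → k ≤ n → r k = rwordB s k :=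
  stmt10_general n G r s hRb1 hRb3 hRb7 hs0 hs
end

section
/- Let n > 3, let G be a group, and let r_2, …, r_n ∈ G satisfy the relations (R1)–(R6). Then the elements s_i := r_{i+1} r_2 r_{i+1} for i ∈ [1,n-1] satisfy the type A Coxeter relations: s_i^2 = 1 for i ∈ [1,n-1]; (s_i s_{i+1})^3 = 1 for i ∈ [1,n-2]; and (s_i s_j)^2 = 1 for i ∈ [1,n-3] and j ∈ [i+2,n-1]. -/
/-!
Write `t k = r k * r 2 * r k`, so that `s i = t (i + 1)` and `t 2 = r 2`. Since each `t k` is an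
involution, relation (R4) says that conjugation by `r l` sends `t m` to
`t k` whenever `k + m = l + 2` and `3 ≤ m ≤ l` (for `m = l` this is just `t 2 = r 2`). Hence
`s i * s j` is conjugate by `r (j + 1)` to `t (j - i + 2) * r 2 = (r (j - i + 2) * r 2) ^ 2`, and
the braid relation and the commutation relations reduce to (R2) and (R3).
-/

section Involution

variable {G : Type*} [Group G] {a b x : G}

lemma swap_pow_eq_one {k : ℕ} (h : (a * b) ^ k = 1) : (b * a) ^ k = 1 := by
  have hconj : (b * a) ^ k = a⁻¹ * (a * b) ^ k * a⁻¹⁻¹ := by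
    rw [← conj_pow]; group
  rw [hconj, h]; group

lemma conj_pow_of_mul_self_eq_one (hx : x * x = 1) (w : G) (m : ℕ) :
    (x * w * x) ^ m = x * w ^ m * x := by
  simpa only [inv_eq_of_mul_eq_one_right hx] using conj_pow (i := m) (a := x) (b := w)

lemma conj_mul_conj_of_mul_self_eq_one (hx : x * x = 1) (u v : G) :
    (x * u * x) * (x * v * x) = x * (u * v) * x := by
  calc (x * u * x) * (x * v * x) = x * u * (x * x) * v * x := by group
    _ = x * (u * v) * x := by rw [hx]; group

lemma conj_pow_eq_one_of_mul_self_eq_one (hx : x * x = 1) {w : G} {m : ℕ} (hw : w ^ m = 1) :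
    (x * w * x) ^ m = 1 := by
  rw [conj_pow_of_mul_self_eq_one hx, hw, mul_one, hx]

lemma conj_mul_self_eq_one (hx : x * x = 1) {w : G} (hw : w * w = 1) :
    (x * w * x) * (x * w * x) = 1 := by
  rw [conj_mul_conj_of_mul_self_eq_one hx, hw, mul_one, hx]

end Involution

section Relations

variable {G : Type*} [Group G] {n : ℕ} {r : ℕ → G}

lemma r_conj_t_eq_t_of_add_eq (hR1 : ∀ k, 2 ≤ k → k ≤ n → r k * r k = 1)
    (hR4 : ∀ l k, 4 ≤ l → l ≤ n → 3 ≤ k → k ≤ l - 1 →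
      r l * r (l - k + 2) * r 2 * r (l - k + 2) * r l * r k * r 2 * r k = 1)
    {k l m : ℕ} (hklm : k + m = l + 2) (hk : 2 ≤ k) (hm : 3 ≤ m) (hl : l ≤ n) :
    r l * (r m * r 2 * r m) * r l = r k * r 2 * r k := by
  obtain rfl | hk3 := eq_or_lt_of_le hk
  · obtain rfl : m = l := by omega
    have hrl : r m * r m = 1 := hR1 m (by omega) hl
    have hr2 : r 2 * r 2 = 1 := hR1 2 le_rfl (by omega)
    calc r m * (r m * r 2 * r m) * r m = (r m * r m) * r 2 * (r m * r m) := by group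
      _ = r 2 * r 2 * r 2 := by simp only [hrl, hr2, one_mul, mul_one]
  · have h := hR4 l k (by omega) hl hk3 (by omega)
    rw [show l - k + 2 = m by omega] at h
    have htk : (r k * r 2 * r k) * (r k * r 2 * r k) = 1 :=
      conj_mul_self_eq_one (hR1 k hk (by omega)) (hR1 2 le_rfl (by omega))
    refine (eq_inv_of_mul_eq_one_left ?_).trans (inv_eq_of_mul_eq_one_right htk)
    rw [← h]; group

end Relations

theorem stmt13_general (n : ℕ) (G : Type*) [Group G] (r : ℕ → G)
    (hR1 : ∀ k, 2 ≤ k → k ≤ n → r k * r k = 1)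
    (hR2 : (r 2 * r 3) ^ 3 = 1)
    (hR3 : ∀ k, 4 ≤ k → k ≤ n → (r 2 * r k) ^ 4 = 1)
    (hR4 : ∀ l k, 4 ≤ l → l ≤ n → 3 ≤ k → k ≤ l - 1 →
      r l * r (l - k + 2) * r 2 * r (l - k + 2) * r l * r k * r 2 * r k = 1) :
    (∀ i, 1 ≤ i → i ≤ n - 1 →
      (r (i + 1) * r 2 * r (i + 1)) * (r (i + 1) * r 2 * r (i + 1)) = 1) ∧
    (∀ i, 1 ≤ i → i ≤ n - 2 →
      ((r (i + 1) * r 2 * r (i + 1)) * (r (i + 2) * r 2 * r (i + 2))) ^ 3 = 1) ∧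
    (∀ i j, 1 ≤ i → i ≤ n - 3 → i + 2 ≤ j → j ≤ n - 1 →
      ((r (i + 1) * r 2 * r (i + 1)) * (r (j + 1) * r 2 * r (j + 1))) ^ 2 = 1) := by
  refine ⟨fun i hi hin => ?_, fun i hi hin => ?_, fun i j hi _ hij hjn => ?_⟩
  · exact conj_mul_self_eq_one (hR1 _ (by omega) (by omega)) (hR1 2 le_rfl (by omega))
  · rw [← r_conj_t_eq_t_of_add_eq hR1 hR4 (l := i + 2) (m := 3) (by omega) (by omega) le_rfl (by omega),
      conj_mul_conj_of_mul_self_eq_one (hR1 _ (by omega) (by omega))]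
    refine conj_pow_eq_one_of_mul_self_eq_one (hR1 _ (by omega) (by omega)) ?_
    calc (r 3 * r 2 * r 3 * r 2) ^ 3
        = ((r 3 * r 2) ^ 3) ^ 2 := by rw [pow_right_comm, sq, ← mul_assoc]
      _ = 1 := by rw [swap_pow_eq_one hR2, one_pow]
  · rw [← r_conj_t_eq_t_of_add_eq hR1 hR4 (l := j + 1) (m := j - i + 2) (by omega) (by omega)
      (by omega) (by omega), conj_mul_conj_of_mul_self_eq_one (hR1 _ (by omega) (by omega))]
    refine conj_pow_eq_one_of_mul_self_eq_one (hR1 _ (by omega) (by omega)) ?_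
    calc (r (j - i + 2) * r 2 * r (j - i + 2) * r 2) ^ 2
        = (r (j - i + 2) * r 2) ^ 4 := by rw [show 4 = 2 * 2 from rfl, pow_mul, sq (r _ * r 2), ← mul_assoc]
      _ = 1 := swap_pow_eq_one (hR3 _ (by omega) (by omega))

theorem stmt13 (n : ℕ) (hn : 3 < n) (G : Type*) [Group G] (r : ℕ → G)
    (hR1 : ∀ k, 2 ≤ k → k ≤ n → r k * r k = 1)
    (hR2 : (r 2 * r 3) ^ 3 = 1)
    (hR3 : ∀ k, 4 ≤ k → k ≤ n → (r 2 * r k) ^ 4 = 1)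
    (hR4 : ∀ l k, 4 ≤ l → l ≤ n → 3 ≤ k → k ≤ l - 1 →
      r l * r (l - k + 2) * r 2 * r (l - k + 2) * r l * r k * r 2 * r k = 1)
    (hR5 : ∀ k, 3 ≤ k → k ≤ n - 1 →
      r k * r (k - 1) * r (k + 1) * r 2 * r (k + 1) * r k * r (k + 1) = 1)
    (hR6 : ∀ k, 3 ≤ k → k ≤ n - 1 →
      (r k * r (k - 1)) ^ 2 * r (k + 1) * r 3 * r (k + 1) * r (k - 1) * r (k + 1) = 1) :
    (∀ i, 1 ≤ i → i ≤ n - 1 →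
      (r (i + 1) * r 2 * r (i + 1)) * (r (i + 1) * r 2 * r (i + 1)) = 1) ∧
    (∀ i, 1 ≤ i → i ≤ n - 2 →
      ((r (i + 1) * r 2 * r (i + 1)) * (r (i + 2) * r 2 * r (i + 2))) ^ 3 = 1) ∧
    (∀ i j, 1 ≤ i → i ≤ n - 3 → i + 2 ≤ j → j ≤ n - 1 →
      ((r (i + 1) * r 2 * r (i + 1)) * (r (j + 1) * r 2 * r (j + 1))) ^ 2 = 1) :=
  stmt13_general n G r hR1 hR2 hR3 hR4
end

section
/- Let n > 3, let G be a group, let s_1, …, s_{n-1} ∈ G satisfy the type A Coxeter relations, and define r_k = s_1 (s_2 s_1) (s_3 s_2 s_1) ⋯ (s_{k-1} s_{k-2} ⋯ s_2 s_1) for k ∈ [2,n]. Then the elements r_2, …, r_n satisfy the relations (R1)–(R6). -/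
/-!
In the symmetric group `r k` is the longest element of `S_k`. Writing `d k = s_k ⋯ s₁`, the
word satisfies both recursions `r (k+1) = r k * d k = (d k)⁻¹ * r k`; the second follows from the
first by induction, because `s_k` is an involution commuting with `r (k-1)`. The two recursions make
`r k` an involution whose conjugation reverses the generators, `r k * s i * r k = s (k - i)`, and
each relation (R1)–(R6) then collapses to a short computation with the `s i`.
-/

section

variable {G : Type*} [Group G]

def descWord (s : ℕ → G) : ℕ → G
  | 0 => 1
  | k + 1 => s (k + 1) * descWord s k

lemma descWord_eq_prod (s : ℕ → G) (k : ℕ) :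
    descWord s k = ((List.range k).map fun i => s (k - i)).prod := by
  induction k with
  | zero => rfl
  | succ k ih => simp [descWord, ih, List.range_succ_eq_map, Function.comp_def]

lemma rwordA_zero (s : ℕ → G) : rwordA s 0 = 1 := by simp [rwordA]

lemma rwordA_succ (s : ℕ → G) (k : ℕ) : rwordA s (k + 1) = rwordA s k * descWord s k := by
  cases k with
  | zero => simp [rwordA, descWord]
  | succ k => simp [rwordA, List.range_succ, descWord_eq_prod]

lemma rwordA_two (s : ℕ → G) : rwordA s 2 = s 1 := by
  simp [rwordA_succ, rwordA_zero, descWord]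

lemma rwordA_three (s : ℕ → G) : rwordA s 3 = s 1 * s 2 * s 1 := by
  simp [rwordA_succ, rwordA_zero, descWord, mul_assoc]

lemma mul_mul_eq_of_mul_pow_three {a b : G} (ha : a * a = 1) (hb : b * b = 1)
    (h : (a * b) ^ 3 = 1) : a * b * a = b * a * b := by
  have h' : a * b * a * (b * a * b) = 1 := by
    simpa only [pow_succ, pow_zero, one_mul, mul_assoc] using h
  calc a * b * a = (b * a * b)⁻¹ := eq_inv_of_mul_eq_one_left h'
    _ = b⁻¹ * a⁻¹ * b⁻¹ := by group
    _ = b * a * b := by rw [inv_eq_of_mul_eq_one_right ha, inv_eq_of_mul_eq_one_right hb]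

lemma commute_of_mul_pow_two_s14 {a b : G} (ha : a * a = 1) (hb : b * b = 1)
    (h : (a * b) ^ 2 = 1) : Commute a b := by
  calc a * b = (a * b)⁻¹ := eq_inv_of_mul_eq_one_left (by rwa [← sq])
    _ = b⁻¹ * a⁻¹ := mul_inv_rev a b
    _ = b * a := by rw [inv_eq_of_mul_eq_one_right ha, inv_eq_of_mul_eq_one_right hb]

structure IsCoxeterTypeA (s : ℕ → G) (n : ℕ) : Prop where
  mul_self : ∀ i, 1 ≤ i → i < n → s i * s i = 1
  braid : ∀ i, 1 ≤ i → i + 1 < n → s i * s (i + 1) * s i = s (i + 1) * s i * s (i + 1)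
  commute : ∀ i j, 1 ≤ i → i + 2 ≤ j → j < n → Commute (s i) (s j)

namespace IsCoxeterTypeA

variable {s : ℕ → G} {n : ℕ}

lemma of_pow_eq_one
    (h1 : ∀ i, 1 ≤ i → i ≤ n - 1 → s i * s i = 1)
    (h2 : ∀ i, 1 ≤ i → i ≤ n - 2 → (s i * s (i + 1)) ^ 3 = 1)
    (h3 : ∀ i j, 1 ≤ i → i ≤ n - 3 → i + 2 ≤ j → j ≤ n - 1 →
      (s i * s j) ^ 2 = 1) :
    IsCoxeterTypeA s n where
  mul_self i hi hin := h1 i hi (by omega)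
  braid i hi hin := mul_mul_eq_of_mul_pow_three (h1 i hi (by omega)) (h1 (i + 1) (by omega)
    (by omega)) (h2 i hi (by omega))
  commute i j hi hij hjn := commute_of_mul_pow_two_s14 (h1 i hi (by omega)) (h1 j (by omega)
    (by omega)) (h3 i j hi (by omega) hij (by omega))

lemma inv_eq (hs : IsCoxeterTypeA s n) {i : ℕ} (hi : 1 ≤ i) (hin : i < n) : (s i)⁻¹ = s i :=
  inv_eq_of_mul_eq_one_right (hs.mul_self i hi hin)

lemma commute_descWord (hs : IsCoxeterTypeA s n) {m p : ℕ} (hp : m + 2 ≤ p) (hpn : p < n) :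
    Commute (descWord s m) (s p) := by
  induction m with
  | zero => exact Commute.one_left _
  | succ m ih => exact (hs.commute _ _ (by omega) hp hpn).mul_left (ih (by omega))

lemma commute_rwordA (hs : IsCoxeterTypeA s n) {k p : ℕ} (hp : k + 1 ≤ p) (hpn : p < n) :
    Commute (rwordA s k) (s p) := by
  induction k with
  | zero => exact Commute.one_left _
  | succ k ih =>
    rw [rwordA_succ]
    exact (ih (by omega)).mul_left (hs.commute_descWord (by omega) hpn)

lemma semiconjBy_descWord (hs : IsCoxeterTypeA s n) {j k : ℕ} (hj : 1 ≤ j) (hjk : j < k)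
    (hkn : k < n) : SemiconjBy (descWord s k) (s (j + 1)) (s j) := by
  induction k, hjk using Nat.le_induction with
  | base =>
    obtain ⟨i, rfl⟩ : ∃ i, j = i + 1 := ⟨j - 1, by omega⟩
    have hbraid : SemiconjBy (s (i + 2) * s (i + 1)) (s (i + 2)) (s (i + 1)) := by
      simpa only [SemiconjBy, mul_assoc] using (hs.braid (i + 1) hj hkn).symm
    simpa only [descWord, mul_assoc] using
      hbraid.mul_left (hs.commute_descWord (m := i) le_rfl hkn)
  | succ k hk ih =>
    exact SemiconjBy.mul_left (hs.commute j (k + 1) hj (by omega) hkn).symm (ih (by omega))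

lemma rwordA_succ_eq_inv_mul (hs : IsCoxeterTypeA s n) {k : ℕ} (hk : k < n) :
    rwordA s (k + 1) = (descWord s k)⁻¹ * rwordA s k := by
  induction k with
  | zero => simp [rwordA_zero, rwordA_succ, descWord]
  | succ k ih =>
    have hc : rwordA s k * s (k + 1) = s (k + 1) * rwordA s k :=
      (hs.commute_rwordA le_rfl hk).eq
    calc rwordA s (k + 2) = rwordA s (k + 1) * (s (k + 1) * descWord s k) := rwordA_succ s _
      _ = (descWord s k)⁻¹ * (rwordA s k * s (k + 1)) * descWord s k := by
          rw [ih (by omega)]; group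
      _ = (descWord s k)⁻¹ * (s (k + 1))⁻¹ * (rwordA s k * descWord s k) := by
          rw [hc, hs.inv_eq (by omega) hk]; group
      _ = (descWord s (k + 1))⁻¹ * rwordA s (k + 1) := by
          rw [← rwordA_succ, descWord, mul_inv_rev]

lemma rwordA_mul_self (hs : IsCoxeterTypeA s n) {k : ℕ} (hk : k ≤ n) :
    rwordA s k * rwordA s k = 1 := by
  induction k with
  | zero => simp [rwordA_zero]
  | succ k ih =>
    calc rwordA s (k + 1) * rwordA s (k + 1)
        = (descWord s k)⁻¹ * (rwordA s k * rwordA s k) * descWord s k := by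
          nth_rw 1 [hs.rwordA_succ_eq_inv_mul (by omega)]; rw [rwordA_succ]; group
      _ = 1 := by rw [ih (by omega)]; group

lemma semiconjBy_rwordA (hs : IsCoxeterTypeA s n) {i k : ℕ} (hi : 1 ≤ i) (hik : i < k)
    (hkn : k ≤ n) : SemiconjBy (rwordA s k) (s i) (s (k - i)) := by
  have h2k : 2 ≤ k := by omega
  induction k, h2k using Nat.le_induction generalizing i with
  | base =>
    obtain rfl : i = 1 := by omega
    rw [rwordA_two]
    exact Commute.refl _
  | succ k hk ih =>
    rcases Nat.lt_or_ge 1 i with h1i | h1i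
    · obtain ⟨j, rfl⟩ : ∃ j, i = j + 1 := ⟨i - 1, by omega⟩
      rw [rwordA_succ, show k + 1 - (j + 1) = k - j by omega]
      exact (ih (by omega) (by omega) (by omega)).mul_left
        (hs.semiconjBy_descWord (by omega) (by omega) (by omega))
    · obtain rfl : i = 1 := by omega
      have hd := (hs.semiconjBy_descWord (j := k - 1) (k := k) (by omega) (by omega)
        (by omega)).inv_symm_left
      rw [hs.rwordA_succ_eq_inv_mul (by omega), show k + 1 - 1 = k - 1 + 1 by omega]
      exact hd.mul_left (ih le_rfl (by omega) (by omega))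

lemma rwordA_mul_mul_rwordA (hs : IsCoxeterTypeA s n) {i k : ℕ} (hi : 1 ≤ i) (hik : i < k)
    (hkn : k ≤ n) : rwordA s k * s i * rwordA s k = s (k - i) := by
  rw [(hs.semiconjBy_rwordA hi hik hkn).eq, mul_assoc, hs.rwordA_mul_self hkn, mul_one]

lemma rwordA_mul_rwordA_succ (hs : IsCoxeterTypeA s n) {k : ℕ} (hk : k ≤ n) :
    rwordA s k * rwordA s (k + 1) = descWord s k := by
  rw [rwordA_succ, ← mul_assoc, hs.rwordA_mul_self hk, one_mul]

lemma rwordA_succ_mul_rwordA (hs : IsCoxeterTypeA s n) {k : ℕ} (hk : k < n) :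
    rwordA s (k + 1) * rwordA s k = (descWord s k)⁻¹ := by
  rw [hs.rwordA_succ_eq_inv_mul hk, mul_assoc, hs.rwordA_mul_self hk.le, mul_one]

lemma relation_R2 (hs : IsCoxeterTypeA s n) (hn : 3 ≤ n) : (rwordA s 2 * rwordA s 3) ^ 3 = 1 := by
  have h1 := hs.mul_self 1 le_rfl (by omega)
  have h2 := hs.mul_self 2 (by omega) (by omega)
  calc (rwordA s 2 * rwordA s 3) ^ 3 = s 2 * (s 1 * s 2 * s 1) * s 2 * s 1 := by
        rw [hs.rwordA_mul_rwordA_succ (k := 2) (by omega)]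
        simp only [descWord, mul_one, pow_succ, pow_zero, one_mul, mul_assoc]
    _ = (s 2 * s 2) * s 1 * (s 2 * s 2) * s 1 := by rw [hs.braid 1 le_rfl (by omega)]; group
    _ = 1 := by rw [h2, one_mul, mul_one, h1]

lemma relation_R3 (hs : IsCoxeterTypeA s n) {k : ℕ} (hk : 4 ≤ k) (hkn : k ≤ n) :
    (rwordA s 2 * rwordA s k) ^ 4 = 1 := by
  calc (rwordA s 2 * rwordA s k) ^ 4 = (s 1 * (rwordA s k * s 1 * rwordA s k)) ^ 2 := by
        rw [rwordA_two]; simp only [pow_succ, pow_zero, one_mul, mul_assoc]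
    _ = s 1 ^ 2 * s (k - 1) ^ 2 := by
        rw [hs.rwordA_mul_mul_rwordA le_rfl (by omega) hkn,
          (hs.commute 1 (k - 1) le_rfl (by omega) (by omega)).mul_pow]
    _ = 1 := by
        rw [sq, sq, hs.mul_self 1 le_rfl (by omega), hs.mul_self (k - 1) (by omega) (by omega),
          one_mul]

lemma relation_R4 (hs : IsCoxeterTypeA s n) {k l : ℕ} (hk : 2 ≤ k) (hkl : k ≤ l)
    (hln : l ≤ n) :
    rwordA s l * rwordA s (l - k + 2) * rwordA s 2 * rwordA s (l - k + 2) * rwordA s l *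
      rwordA s k * rwordA s 2 * rwordA s k = 1 := by
  calc rwordA s l * rwordA s (l - k + 2) * rwordA s 2 * rwordA s (l - k + 2) * rwordA s l *
        rwordA s k * rwordA s 2 * rwordA s k
      = rwordA s l * (rwordA s (l - k + 2) * s 1 * rwordA s (l - k + 2)) * rwordA s l *
          (rwordA s k * s 1 * rwordA s k) := by rw [rwordA_two]; simp only [mul_assoc]
    _ = rwordA s l * s (l - k + 1) * rwordA s l * s (k - 1) := by
        rw [hs.rwordA_mul_mul_rwordA le_rfl (by omega) (by omega),
          hs.rwordA_mul_mul_rwordA le_rfl (by omega) (by omega),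
          show l - k + 2 - 1 = l - k + 1 by omega]
    _ = s (k - 1) * s (k - 1) := by
        rw [hs.rwordA_mul_mul_rwordA (by omega) (by omega) hln,
          show l - (l - k + 1) = k - 1 by omega]
    _ = 1 := hs.mul_self (k - 1) (by omega) (by omega)

lemma relation_R5 (hs : IsCoxeterTypeA s n) {k : ℕ} (hk : 1 ≤ k) (hkn : k < n) :
    rwordA s k * rwordA s (k - 1) * rwordA s (k + 1) * rwordA s 2 * rwordA s (k + 1) *
      rwordA s k * rwordA s (k + 1) = 1 := by
  obtain ⟨m, rfl⟩ : ∃ m, k = m + 1 := ⟨k - 1, by omega⟩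
  rw [Nat.add_sub_cancel]
  calc rwordA s (m + 1) * rwordA s m * rwordA s (m + 1 + 1) * rwordA s 2 * rwordA s (m + 1 + 1) *
        rwordA s (m + 1) * rwordA s (m + 1 + 1)
      = (rwordA s (m + 1) * rwordA s m) * (rwordA s (m + 2) * s 1 * rwordA s (m + 2)) *
          (rwordA s (m + 1) * rwordA s (m + 1 + 1)) := by rw [rwordA_two]; simp only [mul_assoc]
    _ = (descWord s m)⁻¹ * (s (m + 1) * s (m + 1)) * descWord s m := by
        rw [hs.rwordA_succ_mul_rwordA (by omega), hs.rwordA_mul_mul_rwordA le_rfl (by omega) hkn,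
          hs.rwordA_mul_rwordA_succ hkn.le, descWord, show m + 2 - 1 = m + 1 by omega]
        simp only [mul_assoc]
    _ = 1 := by rw [hs.mul_self (m + 1) hk hkn]; group

lemma relation_R6 (hs : IsCoxeterTypeA s n) {k : ℕ} (hk : 2 ≤ k) (hkn : k < n) :
    (rwordA s k * rwordA s (k - 1)) ^ 2 * rwordA s (k + 1) * rwordA s 3 * rwordA s (k + 1) *
      rwordA s (k - 1) * rwordA s (k + 1) = 1 := by
  obtain ⟨m, rfl⟩ : ∃ m, k = m + 1 := ⟨k - 1, by omega⟩
  rw [Nat.add_sub_cancel]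
  have hconj : rwordA s (m + 2) * rwordA s 3 * rwordA s (m + 2) = s (m + 1) * s m * s (m + 1) := by
    have h1 := hs.semiconjBy_rwordA (i := 1) (k := m + 2) le_rfl (by omega) hkn
    have h2 := hs.semiconjBy_rwordA (i := 2) (k := m + 2) (by omega) (by omega) hkn
    rw [show m + 2 - 1 = m + 1 by omega] at h1
    rw [show m + 2 - 2 = m by omega] at h2
    rw [rwordA_three, ((h1.mul_right h2).mul_right h1).eq, mul_assoc, hs.rwordA_mul_self hkn,
      mul_one]
  have hprod : rwordA s m * rwordA s (m + 2) = descWord s m * (s (m + 1) * descWord s m) := by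
    rw [rwordA_succ, rwordA_succ, ← mul_assoc, ← mul_assoc, hs.rwordA_mul_self (by omega),
      one_mul, descWord]
  have hshift : s (m + 1) * descWord s m * s (m + 1) = s m * (s (m + 1) * descWord s m) := by
    simpa only [descWord, mul_assoc] using
      (hs.semiconjBy_descWord (j := m) (k := m + 1) (by omega) m.lt_add_one hkn).eq
  calc (rwordA s (m + 1) * rwordA s m) ^ 2 * rwordA s (m + 1 + 1) * rwordA s 3 *
        rwordA s (m + 1 + 1) * rwordA s m * rwordA s (m + 1 + 1)
      = (rwordA s (m + 1) * rwordA s m) ^ 2 * (rwordA s (m + 2) * rwordA s 3 * rwordA s (m + 2)) *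
          (rwordA s m * rwordA s (m + 2)) := by simp only [mul_assoc]
    _ = ((descWord s m)⁻¹) ^ 2 * (s (m + 1) * s m) * (s (m + 1) * descWord s m * s (m + 1)) *
          descWord s m := by
        rw [hs.rwordA_succ_mul_rwordA (by omega), hconj, hprod]; group
    _ = ((descWord s m)⁻¹) ^ 2 * (s (m + 1) * (s m * s m) * s (m + 1)) *
          (descWord s m * descWord s m) := by rw [hshift]; group
    _ = 1 := by
        rw [hs.mul_self m (by omega) (by omega), mul_one, hs.mul_self (m + 1) (by omega) hkn]
        group

end IsCoxeterTypeA

end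

theorem stmt14 (n : ℕ) (hn : 3 < n) (G : Type*) [Group G] (s : ℕ → G)
    (hA1 : ∀ i, 1 ≤ i → i ≤ n - 1 → s i * s i = 1)
    (hA2 : ∀ i, 1 ≤ i → i ≤ n - 2 → (s i * s (i + 1)) ^ 3 = 1)
    (hA3 : ∀ i j, 1 ≤ i → i ≤ n - 3 → i + 2 ≤ j → j ≤ n - 1 → (s i * s j) ^ 2 = 1) :
    let r : ℕ → G := rwordA s
    (∀ k, 2 ≤ k → k ≤ n → r k * r k = 1) ∧
    ((r 2 * r 3) ^ 3 = 1) ∧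
    (∀ k, 4 ≤ k → k ≤ n → (r 2 * r k) ^ 4 = 1) ∧
    (∀ l k, 4 ≤ l → l ≤ n → 3 ≤ k → k ≤ l - 1 →
      r l * r (l - k + 2) * r 2 * r (l - k + 2) * r l * r k * r 2 * r k = 1) ∧
    (∀ k, 3 ≤ k → k ≤ n - 1 →
      r k * r (k - 1) * r (k + 1) * r 2 * r (k + 1) * r k * r (k + 1) = 1) ∧
    (∀ k, 3 ≤ k → k ≤ n - 1 →
      (r k * r (k - 1)) ^ 2 * r (k + 1) * r 3 * r (k + 1) * r (k - 1) * r (k + 1) = 1) := by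
  have hs : IsCoxeterTypeA s n := .of_pow_eq_one hA1 hA2 hA3
  exact ⟨fun k _ hkn => hs.rwordA_mul_self hkn,
    hs.relation_R2 (by omega),
    fun k hk hkn => hs.relation_R3 hk hkn,
    fun l k _ hln hk hkl => hs.relation_R4 (by omega) (by omega) hln,
    fun k hk hkn => hs.relation_R5 (by omega) (by omega),
    fun k hk hkn => hs.relation_R6 (by omega) (by omega)⟩
end
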